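/- arXiv:2202.13955 — 7 statements merged into one kernel-verified Lean document; each statement's English description precedes it below -/
import Mathlib

section
/- Let x and y be positive integers, let H be an (x,y)-grained gadget with parts K', K'', S', S'', let G be a finite graph containing H as an induced subgraph that respects the structure of H, and let [A,B] be a maximum cut of G. Let t be the number of vertices in V(G) \ V(H) adjacent to some vertex of H, let ℓ be the number of vertices of G adjacent to some vertex in S', and let r be the number of vertices of G adjacent to some vertex in S''. If ℓ and r are odd, y > 2t, and x > t + 2y, then either S' ⊆ A and K' ⊆ B, or S' ⊆ B and K' ⊆ A. -/
/-- Size of the cut-set of the cut `[A,B]`. -/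
noncomputable def cutSize {V : Type} (G : SimpleGraph V) (A B : Set V) : ℕ :=
  {p : V × V | p.1 ∈ A ∧ p.2 ∈ B ∧ G.Adj p.1 p.2}.ncard

/-- `[A,B]` is a maximum cut of `G`. -/
def IsMaxCut {V : Type} (G : SimpleGraph V) (A B : Set V) : Prop :=
  A ∪ B = Set.univ ∧ Disjoint A B ∧
    ∀ A' B' : Set V, A' ∪ B' = Set.univ → Disjoint A' B' →
      cutSize G A' B' ≤ cutSize G A B

/-- `G` restricted to `K1 ∪ K2 ∪ S1 ∪ S2` is an `(x,y)`-grained gadget. -/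
structure IsGrainedGadget {V : Type} (G : SimpleGraph V) (x y : ℕ)
    (K1 K2 S1 S2 : Set V) : Prop where
  dK1K2 : Disjoint K1 K2
  dK1S1 : Disjoint K1 S1
  dK1S2 : Disjoint K1 S2
  dK2S1 : Disjoint K2 S1
  dK2S2 : Disjoint K2 S2
  dS1S2 : Disjoint S1 S2
  cardK1 : K1.ncard = y
  cardK2 : K2.ncard = y
  cardS1 : S1.ncard = x
  cardS2 : S2.ncard = x
  adj : ∀ u ∈ K1 ∪ K2 ∪ S1 ∪ S2, ∀ v ∈ K1 ∪ K2 ∪ S1 ∪ S2, u ≠ v →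
    (G.Adj u v ↔ ((u ∈ K1 ∪ K2 ∧ v ∈ K1 ∪ K2) ∨ (u ∈ K1 ∧ v ∈ S1) ∨ (u ∈ S1 ∧ v ∈ K1)
      ∨ (u ∈ K2 ∧ v ∈ S2) ∨ (u ∈ S2 ∧ v ∈ K2)))

/-- `G` respects the structure of the grained gadget with parts `K1, K2, S1, S2`. -/
def RespectsStructure {V : Type} (G : SimpleGraph V) (K1 K2 S1 S2 : Set V) : Prop :=
  ∀ u, u ∉ K1 ∪ K2 ∪ S1 ∪ S2 →
    G.neighborSet u ∩ (K1 ∪ K2 ∪ S1 ∪ S2) = ∅ ∨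
    G.neighborSet u ∩ (K1 ∪ K2 ∪ S1 ∪ S2) = K1 ∪ K2 ∪ S1 ∪ S2 ∨
    G.neighborSet u ∩ (K1 ∪ K2 ∪ S1 ∪ S2) = K1 ∨
    G.neighborSet u ∩ (K1 ∪ K2 ∪ S1 ∪ S2) = K2 ∨
    G.neighborSet u ∩ (K1 ∪ K2 ∪ S1 ∪ S2) = K1 ∪ S1 ∨
    G.neighborSet u ∩ (K1 ∪ K2 ∪ S1 ∪ S2) = K2 ∪ S2

/-!
All vertices of `S'` have the same neighbourhood `N`, of odd size `ℓ`. In a maximum cut no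
vertex has more neighbours on its own side than on the other, so a vertex of `S'` in `A` forces
`|N ∩ A| ≤ |N ∩ B|` and one in `B` forces the reverse; as `ℓ` is odd, `S'` lies on one side.
A vertex of `K'` on that same side would have at least `x` neighbours there (all of `S'`) but
at most `2y + t` on the other side (`K' ∪ K''` and the outside neighbours of the gadget),
contradicting `x > t + 2y`.
-/

lemma cutSize_comm {V : Type} (G : SimpleGraph V) (A B : Set V) :
    cutSize G A B = cutSize G B A := by
  have h : {p : V × V | p.1 ∈ B ∧ p.2 ∈ A ∧ G.Adj p.1 p.2} =
      Prod.swap '' {p : V × V | p.1 ∈ A ∧ p.2 ∈ B ∧ G.Adj p.1 p.2} := by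
    ext ⟨a, b⟩
    simp only [Set.mem_ofPred_eq, Set.mem_image, Prod.exists, Prod.swap_prod_mk, Prod.mk.injEq]
    constructor
    · rintro ⟨ha, hb, hab⟩
      exact ⟨b, a, ⟨hb, ha, hab.symm⟩, rfl, rfl⟩
    · rintro ⟨_, _, ⟨hb, ha, hba⟩, rfl, rfl⟩
      exact ⟨ha, hb, hba.symm⟩
  rw [cutSize, cutSize, h, Set.ncard_image_of_injective _ Prod.swap_injective]

lemma IsMaxCut.symm {V : Type} {G : SimpleGraph V} {A B : Set V} (h : IsMaxCut G A B) :
    IsMaxCut G B A :=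
  ⟨Set.union_comm A B ▸ h.1, h.2.1.symm,
    fun A' B' hu hd => cutSize_comm G B A ▸ h.2.2 A' B' hu hd⟩

lemma IsMaxCut.mem_right_of_notMem_left {V : Type} {G : SimpleGraph V} {A B : Set V}
    (h : IsMaxCut G A B) {v : V} (hv : v ∉ A) : v ∈ B :=
  ((h.1 ▸ Set.mem_univ v : v ∈ A ∪ B)).resolve_left hv

lemma cutSize_diff_singleton_insert_add {V : Type} [Finite V] (G : SimpleGraph V)
    {A B : Set V} (hAB : Disjoint A B) {v : V} (hv : v ∈ A) :
    cutSize G (A \ {v}) (insert v B) + (G.neighborSet v ∩ B).ncard =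
      cutSize G A B + (G.neighborSet v ∩ A).ncard := by
  have hvB : v ∉ B := Set.disjoint_left.mp hAB hv
  set E' := {p : V × V | p.1 ∈ A \ {v} ∧ p.2 ∈ insert v B ∧ G.Adj p.1 p.2}
  set E := {p : V × V | p.1 ∈ A ∧ p.2 ∈ B ∧ G.Adj p.1 p.2}
  set P := (fun b => (v, b)) '' (G.neighborSet v ∩ B)
  set Q := (fun a => (a, v)) '' (G.neighborSet v ∩ A)
  -- both sides are the cut edges of `[A, B]` together with the edges from `A` into `v`
  have hsplit : E' ∪ P = E ∪ Q := by
    ext ⟨a, b⟩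
    simp only [E', E, P, Q, Set.mem_union, Set.mem_ofPred_eq, Set.mem_image, Set.mem_inter_iff,
      SimpleGraph.mem_neighborSet, Set.mem_sdiff, Set.mem_singleton_iff, Set.mem_insert_iff,
      Prod.mk.injEq]
    constructor
    · rintro (⟨⟨ha, hav⟩, rfl | hb, hab⟩ | ⟨b', ⟨hvb, hb⟩, rfl, rfl⟩)
      · exact Or.inr ⟨a, ⟨hab.symm, ha⟩, rfl, rfl⟩
      · exact Or.inl ⟨ha, hb, hab⟩
      · exact Or.inl ⟨hv, hb, hvb⟩
    · rintro (⟨ha, hb, hab⟩ | ⟨a', ⟨hva, ha⟩, rfl, rfl⟩)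
      · by_cases hav : a = v
        · subst hav
          exact Or.inr ⟨b, ⟨hab, hb⟩, rfl, rfl⟩
        · exact Or.inl ⟨⟨ha, hav⟩, Or.inr hb, hab⟩
      · exact Or.inl ⟨⟨ha, hva.ne'⟩, Or.inl rfl, hva.symm⟩
  have hE'P : Disjoint E' P := Set.disjoint_left.mpr fun p hp ⟨_, _, hpv⟩ =>
    hp.1.2 (congrArg Prod.fst hpv).symm
  have hEQ : Disjoint E Q := Set.disjoint_left.mpr fun _ hp ⟨_, _, hpv⟩ => by
    subst hpv
    exact hvB hp.2.1
  have hP : P.ncard = (G.neighborSet v ∩ B).ncard :=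
    Set.ncard_image_of_injective _ fun _ _ h => congrArg Prod.snd h
  have hQ : Q.ncard = (G.neighborSet v ∩ A).ncard :=
    Set.ncard_image_of_injective _ fun _ _ h => congrArg Prod.fst h
  rw [← hP, ← hQ, cutSize, cutSize, ← Set.ncard_union_eq hE'P, ← Set.ncard_union_eq hEQ,
    hsplit]

lemma IsMaxCut.ncard_neighborSet_inter_le {V : Type} [Finite V] {G : SimpleGraph V}
    {A B : Set V} (h : IsMaxCut G A B) {v : V} (hv : v ∈ A) :
    (G.neighborSet v ∩ A).ncard ≤ (G.neighborSet v ∩ B).ncard := by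
  have hunion : A \ {v} ∪ insert v B = Set.univ := by
    rw [Set.eq_univ_iff_forall]
    intro u
    by_cases huv : u = v
    · exact Or.inr (Or.inl huv)
    · rcases (h.1 ▸ Set.mem_univ u : u ∈ A ∪ B) with hu | hu
      · exact Or.inl ⟨hu, huv⟩
      · exact Or.inr (Or.inr hu)
  have hdisj : Disjoint (A \ {v}) (insert v B) :=
    Set.disjoint_insert_right.mpr ⟨fun hv' => hv'.2 rfl, h.2.1.mono_left Set.sdiff_subset⟩
  have hle := h.2.2 _ _ hunion hdisj
  have := cutSize_diff_singleton_insert_add G h.2.1 hv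
  omega

lemma IsMaxCut.subset_or_subset_of_neighborSet_eq {V : Type} [Finite V] {G : SimpleGraph V}
    {A B S N : Set V} (h : IsMaxCut G A B) (hN : ∀ s ∈ S, G.neighborSet s = N)
    (hodd : Odd N.ncard) : S ⊆ A ∨ S ⊆ B := by
  have hsplit : (N ∩ A).ncard + (N ∩ B).ncard = N.ncard := by
    rw [← Set.ncard_union_eq (h.2.1.mono Set.inter_subset_right Set.inter_subset_right),
      ← Set.inter_union_distrib_left, h.1, Set.inter_univ]
  by_contra! hS
  obtain ⟨s, hs, hsA⟩ := Set.not_subset.mp hS.1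
  obtain ⟨s', hs', hs'B⟩ := Set.not_subset.mp hS.2
  have hAB := hN s' hs' ▸ h.ncard_neighborSet_inter_le (h.symm.mem_right_of_notMem_left hs'B)
  have hBA := hN s hs ▸ h.symm.ncard_neighborSet_inter_le (h.mem_right_of_notMem_left hsA)
  obtain ⟨c, hc⟩ := hodd
  omega

def externalNeighbors {V : Type} (G : SimpleGraph V) (H : Set V) : Set V :=
  {u | u ∉ H ∧ ∃ v ∈ H, G.Adj u v}

namespace IsGrainedGadget

variable {V : Type} {G : SimpleGraph V} {x y : ℕ} {K1 K2 S1 S2 : Set V}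

lemma adj_of_mem_K1_of_mem_S1 (hH : IsGrainedGadget G x y K1 K2 S1 S2) {k s : V} (hk : k ∈ K1)
    (hs : s ∈ S1) : G.Adj k s :=
  (hH.adj k (by simp [hk]) s (by simp [hs]) (hH.dK1S1.ne_of_mem hk hs)).mpr (by simp [hk, hs])

lemma mem_K1_of_adj_of_mem_S1 (hH : IsGrainedGadget G x y K1 K2 S1 S2) {u s : V}
    (hu : u ∈ K1 ∪ K2 ∪ S1 ∪ S2) (hs : s ∈ S1) (hus : G.Adj u s) : u ∈ K1 := by
  have hsK1 : s ∉ K1 := hH.dK1S1.notMem_of_mem_right hs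
  have hsK2 : s ∉ K2 := hH.dK2S1.notMem_of_mem_right hs
  have hsS2 : s ∉ S2 := hH.dS1S2.notMem_of_mem_left hs
  simpa [hs, hsK1, hsK2, hsS2] using (hH.adj u hu s (by simp [hs]) hus.ne).mp hus

lemma mem_of_adj_of_mem_K1 (hH : IsGrainedGadget G x y K1 K2 S1 S2) {k u : V} (hk : k ∈ K1)
    (hu : u ∈ K1 ∪ K2 ∪ S1 ∪ S2) (hku : G.Adj k u) : u ∈ K1 ∪ K2 ∪ S1 := by
  have hkK2 : k ∉ K2 := hH.dK1K2.notMem_of_mem_left hk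
  have hkS1 : k ∉ S1 := hH.dK1S1.notMem_of_mem_left hk
  have hkS2 : k ∉ S2 := hH.dK1S2.notMem_of_mem_left hk
  have := (hH.adj k (by simp [hk]) u hu hku.ne).mp hku
  simp only [Set.mem_union, hk, hkK2, hkS1, hkS2] at this ⊢
  tauto

lemma adj_of_adj_of_mem_S1 (hH : IsGrainedGadget G x y K1 K2 S1 S2)
    (hresp : RespectsStructure G K1 K2 S1 S2) {u v s : V} (hu : u ∉ K1 ∪ K2 ∪ S1 ∪ S2)
    (hv : v ∈ S1) (hs : s ∈ S1) (huv : G.Adj u v) : G.Adj u s := by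
  have hvK1 : v ∉ K1 := hH.dK1S1.notMem_of_mem_right hv
  have hvK2 : v ∉ K2 := hH.dK2S1.notMem_of_mem_right hv
  have hvS2 : v ∉ S2 := hH.dS1S2.notMem_of_mem_left hv
  have hvN : v ∈ G.neighborSet u ∩ (K1 ∪ K2 ∪ S1 ∪ S2) := ⟨huv, by simp [hv]⟩
  suffices hsN : s ∈ G.neighborSet u ∩ (K1 ∪ K2 ∪ S1 ∪ S2) from hsN.1
  rcases hresp u hu with h | h | h | h | h | h <;> rw [h] at hvN ⊢ <;>
    simp_all only [Set.mem_union, Set.mem_empty_iff_false] <;> tauto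

lemma neighborSet_eq_of_mem_S1 (hH : IsGrainedGadget G x y K1 K2 S1 S2)
    (hresp : RespectsStructure G K1 K2 S1 S2) {s : V} (hs : s ∈ S1) :
    G.neighborSet s = {u | ∃ v ∈ S1, G.Adj u v} := by
  ext u
  refine ⟨fun hsu => ⟨s, hs, hsu.symm⟩, fun ⟨v, hv, huv⟩ => ?_⟩
  by_cases hu : u ∈ K1 ∪ K2 ∪ S1 ∪ S2
  · exact (hH.adj_of_mem_K1_of_mem_S1 (hH.mem_K1_of_adj_of_mem_S1 hu hv huv) hs).symm
  · exact (hH.adj_of_adj_of_mem_S1 hresp hu hv hs huv).symm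

lemma K1_subset_of_S1_subset [Finite V] (hH : IsGrainedGadget G x y K1 K2 S1 S2) {A B : Set V}
    (hmax : IsMaxCut G A B) (hS1 : S1 ⊆ A)
    (hx : (externalNeighbors G (K1 ∪ K2 ∪ S1 ∪ S2)).ncard + 2 * y < x) :
    K1 ⊆ B := by
  intro k hk
  by_contra hkB
  have hkA : k ∈ A := hmax.symm.mem_right_of_notMem_left hkB
  have hkH : k ∈ K1 ∪ K2 ∪ S1 ∪ S2 := by simp [hk]
  have hA : x ≤ (G.neighborSet k ∩ A).ncard :=
    hH.cardS1 ▸ Set.ncard_le_ncard fun s hs => ⟨hH.adj_of_mem_K1_of_mem_S1 hk hs, hS1 hs⟩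
  have hB_sub :
      G.neighborSet k ∩ B ⊆ K1 ∪ K2 ∪ externalNeighbors G (K1 ∪ K2 ∪ S1 ∪ S2) := by
    rintro u ⟨hku, huB⟩
    by_cases hu : u ∈ K1 ∪ K2 ∪ S1 ∪ S2
    · rcases hH.mem_of_adj_of_mem_K1 hk hu hku with hu' | huS1
      · exact Or.inl hu'
      · exact absurd huB (hmax.2.1.notMem_of_mem_left (hS1 huS1))
    · exact Or.inr ⟨hu, k, hkH, hku.symm⟩
  have hB : (G.neighborSet k ∩ B).ncard ≤
      (externalNeighbors G (K1 ∪ K2 ∪ S1 ∪ S2)).ncard + 2 * y := by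
    calc (G.neighborSet k ∩ B).ncard
        ≤ (K1 ∪ K2 ∪ externalNeighbors G (K1 ∪ K2 ∪ S1 ∪ S2)).ncard :=
          Set.ncard_le_ncard hB_sub
      _ ≤ K1.ncard + K2.ncard +
          (externalNeighbors G (K1 ∪ K2 ∪ S1 ∪ S2)).ncard :=
          (Set.ncard_union_le _ _).trans (Nat.add_le_add_right (Set.ncard_union_le _ _) _)
      _ = _ := by rw [hH.cardK1, hH.cardK2]; ring
  have := hmax.ncard_neighborSet_inter_le hkA
  omega

end IsGrainedGadget

theorem grained_gadget_S1_K1_opposite_general {V : Type} [Fintype V] (G : SimpleGraph V)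
    (x y : ℕ) (K1 K2 S1 S2 : Set V)
    (hH : IsGrainedGadget G x y K1 K2 S1 S2)
    (hresp : RespectsStructure G K1 K2 S1 S2)
    (A B : Set V) (hmax : IsMaxCut G A B)
    (t l : ℕ)
    (ht : t = {u | u ∉ K1 ∪ K2 ∪ S1 ∪ S2 ∧ ∃ v ∈ K1 ∪ K2 ∪ S1 ∪ S2, G.Adj u v}.ncard)
    (hl : l = {u | ∃ v ∈ S1, G.Adj u v}.ncard)
    (hlodd : Odd l) (hxty : x > t + 2 * y) :
    (S1 ⊆ A ∧ K1 ⊆ B) ∨ (S1 ⊆ B ∧ K1 ⊆ A) := by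
  have hx : (externalNeighbors G (K1 ∪ K2 ∪ S1 ∪ S2)).ncard + 2 * y < x := ht ▸ hxty
  rcases hmax.subset_or_subset_of_neighborSet_eq (fun _ hs => hH.neighborSet_eq_of_mem_S1 hresp hs)
    (hl ▸ hlodd) with hS1A | hS1B
  · exact Or.inl ⟨hS1A, hH.K1_subset_of_S1_subset hmax hS1A hx⟩
  · exact Or.inr ⟨hS1B, hH.K1_subset_of_S1_subset hmax.symm hS1B hx⟩

/-- in a maximum cut of a graph respecting the structure of an
`(x,y)`-grained gadget (with the stated numeric conditions), `S'` and `K'`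
lie in opposite parts. -/
theorem grained_gadget_S1_K1_opposite {V : Type} [Fintype V] (G : SimpleGraph V)
    (x y : ℕ) (hx : 0 < x) (hy : 0 < y) (K1 K2 S1 S2 : Set V)
    (hH : IsGrainedGadget G x y K1 K2 S1 S2)
    (hresp : RespectsStructure G K1 K2 S1 S2)
    (A B : Set V) (hmax : IsMaxCut G A B)
    (t l r : ℕ)
    (ht : t = {u | u ∉ K1 ∪ K2 ∪ S1 ∪ S2 ∧ ∃ v ∈ K1 ∪ K2 ∪ S1 ∪ S2, G.Adj u v}.ncard)
    (hl : l = {u | ∃ v ∈ S1, G.Adj u v}.ncard)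
    (hr : r = {u | ∃ v ∈ S2, G.Adj u v}.ncard)
    (hlodd : Odd l) (hrodd : Odd r) (hyt : y > 2 * t) (hxty : x > t + 2 * y) :
    (S1 ⊆ A ∧ K1 ⊆ B) ∨ (S1 ⊆ B ∧ K1 ⊆ A) :=
  grained_gadget_S1_K1_opposite_general G x y K1 K2 S1 S2 hH hresp A B hmax t l ht hl hlodd hxty
end

section
/- Let x and y be positive integers, let H be an (x,y)-grained gadget with parts K', K'', S', S'', let G be a finite graph containing H as an induced subgraph that respects the structure of H, and let [A,B] be a maximum cut of G. Let t be the number of vertices in V(G) \ V(H) adjacent to some vertex of H, let ℓ be the number of vertices of G adjacent to some vertex in S', and let r be the number of vertices of G adjacent to some vertex in S''. If ℓ and r are odd, y > 2t, and x > t + 2y, then either S'' ⊆ A and K'' ⊆ B, or S'' ⊆ B and K'' ⊆ A. -/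
lemma isMaxCut_comm {V : Type} (G : SimpleGraph V) (A B : Set V)
    (h : IsMaxCut G A B) : IsMaxCut G B A := by
  obtain ⟨hu, hd, hm⟩ := h
  refine ⟨by rw [Set.union_comm]; exact hu, hd.symm, fun A' B' h1 h2 => ?_⟩
  exact le_trans (hm A' B' h1 h2) (le_of_eq (cutSize_comm G A B))

lemma maxcut_local {V : Type} [Fintype V] (G : SimpleGraph V) (A B : Set V)
    (h : IsMaxCut G A B) (v : V) (hv : v ∈ A) :
    (G.neighborSet v ∩ A).ncard ≤ (G.neighborSet v ∩ B).ncard := by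
  obtain ⟨hu, hd, hm⟩ := h
  have hvB : v ∉ B := fun hB => Set.disjoint_left.mp hd hv hB
  set A' := A \ {v} with hA'
  set B' := B ∪ {v} with hB'
  have hu' : A' ∪ B' = Set.univ := by
    ext w
    simp only [hA', hB', Set.mem_union, Set.mem_diff, Set.mem_singleton_iff, Set.mem_univ,
      iff_true]
    by_cases hw : w = v
    · right; right; exact hw
    · have : w ∈ A ∪ B := by rw [hu]; trivial
      rcases this with h | h
      · left; exact ⟨h, hw⟩
      · right; left; exact h
  have hd' : Disjoint A' B' := by
    rw [Set.disjoint_left]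
    rintro w ⟨hwA, hwv⟩ hw
    simp only [hB', Set.mem_union, Set.mem_singleton_iff] at hw
    rcases hw with hw | hw
    · exact Set.disjoint_left.mp hd hwA hw
    · exact hwv hw
  set P : Set (V × V) := {p | p.1 ∈ A ∧ p.1 ≠ v ∧ p.2 ∈ B ∧ G.Adj p.1 p.2} with hP
  have inj1 : Function.Injective (fun b : V => (v, b)) := by
    intro a b h; simpa using h
  have inj2 : Function.Injective (fun a : V => (a, v)) := by
    intro a b h; simpa using h
  have hS : {p : V × V | p.1 ∈ A ∧ p.2 ∈ B ∧ G.Adj p.1 p.2} =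
      P ∪ (fun b => (v, b)) '' (G.neighborSet v ∩ B) := by
    ext ⟨a, b⟩
    simp only [hP, Set.mem_setOf_eq, Set.mem_union, Set.mem_image, Set.mem_inter_iff,
      SimpleGraph.mem_neighborSet, Prod.mk.injEq]
    constructor
    · rintro ⟨h1, h2, h3⟩
      by_cases ha : a = v
      · subst ha; right; exact ⟨b, ⟨h3, h2⟩, rfl, rfl⟩
      · left; exact ⟨h1, ha, h2, h3⟩
    · rintro (⟨h1, _, h2, h3⟩ | ⟨c, ⟨hc1, hc2⟩, e1, e2⟩)
      · exact ⟨h1, h2, h3⟩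
      · subst e1; subst e2; exact ⟨hv, hc2, hc1⟩
  have hS' : {p : V × V | p.1 ∈ A' ∧ p.2 ∈ B' ∧ G.Adj p.1 p.2} =
      P ∪ (fun a => (a, v)) '' (G.neighborSet v ∩ A) := by
    ext ⟨a, b⟩
    simp only [hP, hA', hB', Set.mem_setOf_eq, Set.mem_union, Set.mem_diff,
      Set.mem_singleton_iff, Set.mem_image, Set.mem_inter_iff,
      SimpleGraph.mem_neighborSet, Prod.mk.injEq]
    constructor
    · rintro ⟨⟨h1, hne⟩, h2 | h2, h3⟩
      · left; exact ⟨h1, hne, h2, h3⟩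
      · subst h2; right; exact ⟨a, ⟨h3.symm, h1⟩, rfl, rfl⟩
    · rintro (⟨h1, hne, h2, h3⟩ | ⟨c, ⟨hc1, hc2⟩, e1, e2⟩)
      · exact ⟨⟨h1, hne⟩, Or.inl h2, h3⟩
      · subst e1; subst e2
        exact ⟨⟨hc2, G.ne_of_adj hc1 |>.symm⟩, Or.inr rfl, hc1.symm⟩
  have disj1 : Disjoint P ((fun b => (v, b)) '' (G.neighborSet v ∩ B)) := by
    rw [Set.disjoint_left]
    rintro ⟨a, b⟩ ⟨_, hne, _, _⟩ ⟨c, _, heq⟩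
    simp only [Prod.mk.injEq] at heq
    exact hne heq.1.symm
  have disj2 : Disjoint P ((fun a => (a, v)) '' (G.neighborSet v ∩ A)) := by
    rw [Set.disjoint_left]
    rintro ⟨a, b⟩ ⟨_, _, hb, _⟩ ⟨c, _, heq⟩
    simp only [Prod.mk.injEq] at heq
    exact hvB (heq.2 ▸ hb)
  have h1 : cutSize G A B = P.ncard + (G.neighborSet v ∩ B).ncard := by
    unfold cutSize
    rw [hS, Set.ncard_union_eq disj1 (Set.toFinite _) (Set.toFinite _),
      Set.ncard_image_of_injective _ inj1]
  have h2 : cutSize G A' B' = P.ncard + (G.neighborSet v ∩ A).ncard := by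
    unfold cutSize
    rw [hS', Set.ncard_union_eq disj2 (Set.toFinite _) (Set.toFinite _),
      Set.ncard_image_of_injective _ inj2]
  have := hm A' B' hu' hd'
  omega

lemma gadget_aux {V : Type} [Fintype V] (G : SimpleGraph V)
    (x y : ℕ) (K1 K2 S1 S2 : Set V)
    (hH : IsGrainedGadget G x y K1 K2 S1 S2)
    (hresp : RespectsStructure G K1 K2 S1 S2)
    (A B : Set V) (hmax : IsMaxCut G A B)
    (t : ℕ)
    (ht : t = {u | u ∉ K1 ∪ K2 ∪ S1 ∪ S2 ∧ ∃ v ∈ K1 ∪ K2 ∪ S1 ∪ S2, G.Adj u v}.ncard)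
    (hxty : x > t + 2 * y)
    (hlt : ({u | ∃ v ∈ S2, G.Adj u v} ∩ A).ncard <
      ({u | ∃ v ∈ S2, G.Adj u v} ∩ B).ncard) :
    S2 ⊆ A ∧ K2 ⊆ B := by
  have hS2H : S2 ⊆ K1 ∪ K2 ∪ S1 ∪ S2 := fun u hu => Or.inr hu
  have hK2H : K2 ⊆ K1 ∪ K2 ∪ S1 ∪ S2 := fun u hu => Or.inl (Or.inl (Or.inr hu))
  have hN : ∀ s ∈ S2, G.neighborSet s = {u | ∃ v ∈ S2, G.Adj u v} := by
    intro s hs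
    ext u
    simp only [SimpleGraph.mem_neighborSet, Set.mem_setOf_eq]
    constructor
    · intro h; exact ⟨s, hs, h.symm⟩
    · rintro ⟨v, hv, huv⟩
      by_cases hu : u ∈ K1 ∪ K2 ∪ S1 ∪ S2
      · have hne : u ≠ v := G.ne_of_adj huv
        have hcase := (hH.adj u hu v (hS2H hv) hne).mp huv
        have huK2 : u ∈ K2 := by
          rcases hcase with ⟨_, hv'⟩ | ⟨_, hv'⟩ | ⟨_, hv'⟩ | ⟨hu', _⟩ | ⟨_, hv'⟩
          · rcases hv' with h | h
            · exact absurd hv (Set.disjoint_left.mp hH.dK1S2 h)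
            · exact absurd hv (Set.disjoint_left.mp hH.dK2S2 h)
          · exact absurd hv (Set.disjoint_left.mp hH.dS1S2 hv')
          · exact absurd hv (Set.disjoint_left.mp hH.dK1S2 hv')
          · exact hu'
          · exact absurd hv (Set.disjoint_left.mp hH.dK2S2 hv')
        have hne2 : s ≠ u := fun e => Set.disjoint_left.mp hH.dK2S2 huK2 (e ▸ hs)
        exact (hH.adj s (hS2H hs) u hu hne2).mpr
          (Or.inr (Or.inr (Or.inr (Or.inr ⟨hs, huK2⟩))))
      · have hvmem : v ∈ G.neighborSet u ∩ (K1 ∪ K2 ∪ S1 ∪ S2) := ⟨huv, hS2H hv⟩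
        rcases hresp u hu with h0 | h1 | h2 | h3 | h4 | h5
        · rw [h0] at hvmem; exact absurd hvmem (Set.notMem_empty v)
        · have hsmem : s ∈ G.neighborSet u ∩ (K1 ∪ K2 ∪ S1 ∪ S2) := by
            rw [h1]; exact hS2H hs
          exact hsmem.1.symm
        · rw [h2] at hvmem; exact absurd hv (Set.disjoint_left.mp hH.dK1S2 hvmem)
        · rw [h3] at hvmem; exact absurd hv (Set.disjoint_left.mp hH.dK2S2 hvmem)
        · rw [h4] at hvmem
          rcases hvmem with h | h
          · exact absurd hv (Set.disjoint_left.mp hH.dK1S2 h)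
          · exact absurd hv (Set.disjoint_left.mp hH.dS1S2 h)
        · have hsmem : s ∈ G.neighborSet u ∩ (K1 ∪ K2 ∪ S1 ∪ S2) := by
            rw [h5]; exact Or.inr hs
          exact hsmem.1.symm
  obtain ⟨hun, hdis, -⟩ := id hmax
  have hS2A : S2 ⊆ A := by
    intro s hs
    have hsAB : s ∈ A ∪ B := by rw [hun]; trivial
    rcases hsAB with h | h
    · exact h
    · exfalso
      have hloc := maxcut_local G B A (isMaxCut_comm G A B hmax) s h
      rw [hN s hs] at hloc
      omega
  refine ⟨hS2A, fun k hk => ?_⟩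
  by_contra hkB
  have hkA : k ∈ A := by
    have hAB : k ∈ A ∪ B := by rw [hun]; trivial
    rcases hAB with h | h
    · exact h
    · exact absurd h hkB
  have hloc := maxcut_local G A B hmax k hkA
  have hsub1 : S2 ⊆ G.neighborSet k ∩ A := by
    intro s hs
    refine ⟨?_, hS2A hs⟩
    have hne : k ≠ s := fun e => Set.disjoint_left.mp hH.dK2S2 hk (e ▸ hs)
    exact (hH.adj k (hK2H hk) s (hS2H hs) hne).mpr
      (Or.inr (Or.inr (Or.inr (Or.inl ⟨hk, hs⟩))))
  have hlb : x ≤ (G.neighborSet k ∩ A).ncard := by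
    rw [← hH.cardS2]
    exact Set.ncard_le_ncard hsub1 (Set.toFinite _)
  have hsub2 : G.neighborSet k ∩ B ⊆ K1 ∪ K2 ∪
      {u | u ∉ K1 ∪ K2 ∪ S1 ∪ S2 ∧ ∃ v ∈ K1 ∪ K2 ∪ S1 ∪ S2, G.Adj u v} := by
    rintro u ⟨hadj, huB⟩
    by_cases hu : u ∈ K1 ∪ K2 ∪ S1 ∪ S2
    · have hne : u ≠ k := (G.ne_of_adj hadj).symm
      have hcase := (hH.adj u hu k (hK2H hk) hne).mp hadj.symm
      rcases hcase with ⟨h1, _⟩ | ⟨_, h2⟩ | ⟨_, h2⟩ | ⟨_, h2⟩ | ⟨h1, _⟩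
      · exact Or.inl h1
      · exact absurd h2 (Set.disjoint_left.mp hH.dK2S1 hk)
      · exact absurd hk (Set.disjoint_left.mp hH.dK1K2 h2)
      · exact absurd h2 (Set.disjoint_left.mp hH.dK2S2 hk)
      · exact absurd huB (Set.disjoint_left.mp hdis (hS2A h1))
    · exact Or.inr ⟨hu, k, hK2H hk, hadj.symm⟩
  have hub : (G.neighborSet k ∩ B).ncard ≤ y + y + t := by
    refine le_trans (Set.ncard_le_ncard hsub2 (Set.toFinite _)) ?_
    refine le_trans (Set.ncard_union_le _ _) ?_
    have := Set.ncard_union_le K1 K2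
    rw [ht]
    have e1 := hH.cardK1
    have e2 := hH.cardK2
    omega
  omega

/-- in a maximum cut of a graph respecting the structure of an
`(x,y)`-grained gadget (with the stated numeric conditions), `S'` and `K'`
lie in opposite parts. -/
theorem grained_gadget_S2_K2_opposite {V : Type} [Fintype V] (G : SimpleGraph V)
    (x y : ℕ) (hx : 0 < x) (hy : 0 < y) (K1 K2 S1 S2 : Set V)
    (hH : IsGrainedGadget G x y K1 K2 S1 S2)
    (hresp : RespectsStructure G K1 K2 S1 S2)
    (A B : Set V) (hmax : IsMaxCut G A B)
    (t l r : ℕ)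
    (ht : t = {u | u ∉ K1 ∪ K2 ∪ S1 ∪ S2 ∧ ∃ v ∈ K1 ∪ K2 ∪ S1 ∪ S2, G.Adj u v}.ncard)
    (hl : l = {u | ∃ v ∈ S1, G.Adj u v}.ncard)
    (hr : r = {u | ∃ v ∈ S2, G.Adj u v}.ncard)
    (hlodd : Odd l) (hrodd : Odd r) (hyt : y > 2 * t) (hxty : x > t + 2 * y) :
    (S2 ⊆ A ∧ K2 ⊆ B) ∨ (S2 ⊆ B ∧ K2 ⊆ A) := by
  obtain ⟨hun, hdis, -⟩ := id hmax
  have hpart : r = ({u | ∃ v ∈ S2, G.Adj u v} ∩ A).ncard +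
      ({u | ∃ v ∈ S2, G.Adj u v} ∩ B).ncard := by
    rw [hr, ← Set.ncard_union_eq
      (Disjoint.mono Set.inter_subset_right Set.inter_subset_right hdis)
      (Set.toFinite _) (Set.toFinite _)]
    congr 1
    rw [← Set.inter_union_distrib_left, hun, Set.inter_univ]
  have hne : ({u | ∃ v ∈ S2, G.Adj u v} ∩ A).ncard ≠
      ({u | ∃ v ∈ S2, G.Adj u v} ∩ B).ncard := by
    intro he
    obtain ⟨m, hm⟩ := hrodd
    omega
  rcases lt_or_gt_of_ne hne with h | h
  · exact Or.inl (gadget_aux G x y K1 K2 S1 S2 hH hresp A B hmax t ht hxty h)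
  · exact Or.inr (gadget_aux G x y K1 K2 S1 S2 hH hresp B A
      (isMaxCut_comm G A B hmax) t ht hxty h)
end

section
/- For all positive integers x and y, every (x,y)-grained gadget is a permutation graph. -/
/-- `G` is a permutation graph. -/
def IsPermutationGraph {V : Type} (G : SimpleGraph V) : Prop :=
  ∃ o1 o2 : LinearOrder V, ∀ u v : V, u ≠ v →
    (G.Adj u v ↔ ((o1.lt u v ∧ o2.lt v u) ∨ (o1.lt v u ∧ o2.lt u v)))


theorem grained_gadget_isPermutationGraph' {V : Type} [Fintype V] (H : SimpleGraph V)
    (x y : ℕ) (hx : 0 < x) (hy : 0 < y) (K1 K2 S1 S2 : Set V)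
    (hH : ∀ u ∈ K1 ∪ K2 ∪ S1 ∪ S2, ∀ v ∈ K1 ∪ K2 ∪ S1 ∪ S2, u ≠ v →
    (H.Adj u v ↔ ((u ∈ K1 ∪ K2 ∧ v ∈ K1 ∪ K2) ∨ (u ∈ K1 ∧ v ∈ S1) ∨ (u ∈ S1 ∧ v ∈ K1)
      ∨ (u ∈ K2 ∧ v ∈ S2) ∨ (u ∈ S2 ∧ v ∈ K2))))
    (d12 : Disjoint K1 K2) (d1s1 : Disjoint K1 S1) (d1s2 : Disjoint K1 S2)
    (d2s1 : Disjoint K2 S1) (d2s2 : Disjoint K2 S2) (ds : Disjoint S1 S2)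
    (hV : K1 ∪ K2 ∪ S1 ∪ S2 = Set.univ) :
    ∃ o1 o2 : LinearOrder V, ∀ u v : V, u ≠ v →
    (H.Adj u v ↔ ((o1.lt u v ∧ o2.lt v u) ∨ (o1.lt v u ∧ o2.lt u v))) := by
  classical
  set e : V → ℤ := fun v => ((Fintype.equivFin V v : ℕ) : ℤ) with he
  have einj : Function.Injective e := by
    intro a b h
    simp only [he] at h
    exact (Fintype.equivFin V).injective (Fin.ext (by exact_mod_cast h))
  have enn : ∀ v, 0 ≤ e v := fun v => Int.ofNat_nonneg _
  set b1 : V → Fin 4 := fun u => if u ∈ K1 then 0 else if u ∈ S1 then 1 else if u ∈ S2 then 2 else 3 with hb1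
  set b2 : V → Fin 4 := fun u => if u ∈ S1 then 0 else if u ∈ K2 then 1 else if u ∈ K1 then 2 else 3 with hb2
  set s : V → ℤ := fun u => if u ∈ K1 ∨ u ∈ K2 then -(e u) else e u with hs
  set f1 : V → Fin 4 ×ₗ ℤ := fun u => toLex (b1 u, e u) with hf1def
  set f2 : V → Fin 4 ×ₗ ℤ := fun u => toLex (b2 u, s u) with hf2def
  have hf1 : Function.Injective f1 := by
    intro a b h
    exact einj (congrArg (fun p => (ofLex p).2) h)
  have hf2 : Function.Injective f2 := by
    intro a b h
    have h2 : s a = s b := congrArg (fun p => (ofLex p).2) h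
    have ha := enn a
    have hb := enn b
    apply einj
    simp only [hs] at h2
    split_ifs at h2 <;> omega
  refine ⟨LinearOrder.lift' f1 hf1, LinearOrder.lift' f2 hf2, ?_⟩
  intro u v huv
  have hlt1 : ∀ a b : V, (LinearOrder.lift' f1 hf1).lt a b ↔ f1 a < f1 b := fun a b => Iff.rfl
  have hlt2 : ∀ a b : V, (LinearOrder.lift' f2 hf2).lt a b ↔ f2 a < f2 b := fun a b => Iff.rfl
  have mem : ∀ w : V, (w∈K1 ∧ w∉K2 ∧ w∉S1 ∧ w∉S2) ∨ (w∈K2 ∧ w∉K1 ∧ w∉S1 ∧ w∉S2)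
      ∨ (w∈S1 ∧ w∉K1 ∧ w∉K2 ∧ w∉S2) ∨ (w∈S2 ∧ w∉K1 ∧ w∉K2 ∧ w∉S1) := by
    intro w
    have hw : w ∈ K1 ∪ K2 ∪ S1 ∪ S2 := hV ▸ Set.mem_univ w
    simp only [Set.mem_union] at hw
    rcases hw with ((h | h) | h) | h
    · exact Or.inl ⟨h, Set.disjoint_left.mp d12 h, Set.disjoint_left.mp d1s1 h, Set.disjoint_left.mp d1s2 h⟩
    · exact Or.inr (Or.inl ⟨h, fun h' => Set.disjoint_left.mp d12 h' h, Set.disjoint_left.mp d2s1 h, Set.disjoint_left.mp d2s2 h⟩)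
    · exact Or.inr (Or.inr (Or.inl ⟨h, fun h' => Set.disjoint_left.mp d1s1 h' h, fun h' => Set.disjoint_left.mp d2s1 h' h, Set.disjoint_left.mp ds h⟩))
    · exact Or.inr (Or.inr (Or.inr ⟨h, fun h' => Set.disjoint_left.mp d1s2 h' h, fun h' => Set.disjoint_left.mp d2s2 h' h, fun h' => Set.disjoint_left.mp ds h' h⟩))
  rw [hH u (hV ▸ Set.mem_univ u) v (hV ▸ Set.mem_univ v) huv, hlt1, hlt1, hlt2, hlt2]
  have hne : e u ≠ e v := fun h => huv (einj h)
  rcases mem u with ⟨hu1,hu2,hu3,hu4⟩|⟨hu1,hu2,hu3,hu4⟩|⟨hu1,hu2,hu3,hu4⟩|⟨hu1,hu2,hu3,hu4⟩ <;>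
    rcases mem v with ⟨hv1,hv2,hv3,hv4⟩|⟨hv1,hv2,hv3,hv4⟩|⟨hv1,hv2,hv3,hv4⟩|⟨hv1,hv2,hv3,hv4⟩ <;>
    simp [hf1def, hf2def, hb1, hb2, hs, Prod.Lex.lt_iff, hu1, hu2, hu3, hu4, hv1, hv2, hv3, hv4,
      Set.mem_union] <;>
    omega

/-- every `(x,y)`-grained gadget is a permutation graph. -/
theorem grained_gadget_isPermutationGraph {V : Type} [Fintype V] (H : SimpleGraph V)
    (x y : ℕ) (hx : 0 < x) (hy : 0 < y) (K1 K2 S1 S2 : Set V)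
    (hH : IsGrainedGadget H x y K1 K2 S1 S2)
    (hV : K1 ∪ K2 ∪ S1 ∪ S2 = Set.univ) :
    IsPermutationGraph H :=
  grained_gadget_isPermutationGraph' H x y hx hy K1 K2 S1 S2 hH.adj hH.dK1K2 hH.dK1S1
    hH.dK1S2 hH.dK2S1 hH.dK2S2 hH.dS1S2 hV
end

section
/- Let G be a finite permutation graph. Then G is an interval graph if and only if G contains no induced cycle on four vertices. -/
/-- `G` is an interval graph. -/
def IsIntervalGraph {V : Type} (G : SimpleGraph V) : Prop :=
  ∃ lo hi : V → ℝ, (∀ v, lo v ≤ hi v) ∧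
    ∀ u v : V, u ≠ v →
      (G.Adj u v ↔ (Set.Icc (lo u) (hi u) ∩ Set.Icc (lo v) (hi v)).Nonempty)


/-- `G` contains an induced cycle on four vertices. -/
def HasInducedC4 {V : Type} (G : SimpleGraph V) : Prop :=
  ∃ a b c d : V, a ≠ b ∧ a ≠ c ∧ a ≠ d ∧ b ≠ c ∧ b ≠ d ∧ c ≠ d ∧
    G.Adj a b ∧ G.Adj b c ∧ G.Adj c d ∧ G.Adj d a ∧ ¬ G.Adj a c ∧ ¬ G.Adj b d

lemma lo_basic {V : Type} (o : LinearOrder V) :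
    (∀ v : V, ¬ o.lt v v) ∧ (∀ a b c : V, o.lt a b → o.lt b c → o.lt a c) ∧
    (∀ a b : V, a ≠ b → o.lt a b ∨ o.lt b a) ∧
    (∀ a b : V, o.lt a b → ¬ o.lt b a) := by
  letI := o
  refine ⟨fun v => lt_irrefl v, fun a b c => lt_trans, ?_, fun a b h => not_lt_of_gt h⟩
  intro a b hab
  rcases lt_trichotomy a b with h | h | h
  · exact Or.inl h
  · exact absurd h hab
  · exact Or.inr h

/-- a finite permutation graph is an interval graph iff it has no
induced cycle on four vertices. -/
theorem permutation_interval_iff_no_inducedC4 {V : Type} [Fintype V]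
    (G : SimpleGraph V) (hperm : IsPermutationGraph G) :
    IsIntervalGraph G ↔ ¬ HasInducedC4 G := by
  classical
  constructor
  · -- interval ⇒ no induced C4
    rintro ⟨lo, hi, hle, hiff⟩ ⟨a, b, c, d, hab, hac, had, hbc, hbd, hcd,
      Aab, Abc, Acd, Ada, Nac, Nbd⟩
    have hACempty : ¬ (Set.Icc (lo a) (hi a) ∩ Set.Icc (lo c) (hi c)).Nonempty := by
      intro h; exact Nac ((hiff a c hac).mpr h)
    have hdisj : hi a < lo c ∨ hi c < lo a := by
      by_contra hcon
      push_neg at hcon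
      exact hACempty ⟨max (lo a) (lo c),
        ⟨le_max_left _ _, max_le (hle a) hcon.1⟩,
        ⟨le_max_right _ _, max_le hcon.2 (hle c)⟩⟩
    have hBD : (Set.Icc (lo b) (hi b) ∩ Set.Icc (lo d) (hi d)).Nonempty := by
      rcases hdisj with h | h
      · -- hi a < lo c; point lo c works
        obtain ⟨x, hxa, hxb⟩ := (hiff a b hab).mp Aab
        obtain ⟨y, hyb, hyc⟩ := (hiff b c hbc).mp Abc
        obtain ⟨z, hzc, hzd⟩ := (hiff c d hcd).mp Acd
        obtain ⟨w, hwd, hwa⟩ := (hiff d a had.symm).mp Ada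
        refine ⟨lo c, ⟨?_, ?_⟩, ⟨?_, ?_⟩⟩
        · linarith [hxa.2, hxb.1]
        · linarith [hyb.2, hyc.1]
        · linarith [hwa.2, hwd.1]
        · linarith [hzc.1, hzd.2]
      · -- hi c < lo a; point lo a works
        obtain ⟨x, hxa, hxb⟩ := (hiff a b hab).mp Aab
        obtain ⟨y, hyb, hyc⟩ := (hiff b c hbc).mp Abc
        obtain ⟨z, hzc, hzd⟩ := (hiff c d hcd).mp Acd
        obtain ⟨w, hwd, hwa⟩ := (hiff d a had.symm).mp Ada
        refine ⟨lo a, ⟨?_, ?_⟩, ⟨?_, ?_⟩⟩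
        · linarith [hyc.2, hyb.1]
        · linarith [hxa.1, hxb.2]
        · linarith [hzc.2, hzd.1]
        · linarith [hwa.1, hwd.2]
    exact Nbd ((hiff b d hbd).mpr hBD)
  · -- no induced C4 ⇒ interval
    intro hC4
    obtain ⟨o1, o2, hadj⟩ := hperm
    obtain ⟨irr1, tr1, tot1, asym1⟩ := lo_basic o1
    obtain ⟨irr2, tr2, tot2, asym2⟩ := lo_basic o2
    set P : V → V → Prop := fun u v => o1.lt u v ∧ o2.lt u v with hP
    have Pirr : ∀ v, ¬ P v v := fun v h => irr1 v h.1
    have Ptr : ∀ a b c, P a b → P b c → P a c :=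
      fun a b c h h' => ⟨tr1 _ _ _ h.1 h'.1, tr2 _ _ _ h.2 h'.2⟩
    have Pne : ∀ a b, P a b → a ≠ b := by
      rintro a b h rfl; exact Pirr a h
    have adjP : ∀ u v, u ≠ v → (G.Adj u v ↔ ¬ P u v ∧ ¬ P v u) := by
      intro u v huv
      rw [hadj u v huv]
      constructor
      · rintro (⟨h1, h2⟩ | ⟨h1, h2⟩)
        · exact ⟨fun h => asym2 _ _ h.2 h2, fun h => asym1 _ _ h1 h.1⟩
        · exact ⟨fun h => asym1 _ _ h1 h.1, fun h => asym2 _ _ h.2 h2⟩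
      · rintro ⟨hn1, hn2⟩
        rcases tot1 u v huv with h | h
        · rcases tot2 u v huv with h' | h'
          · exact absurd ⟨h, h'⟩ hn1
          · exact Or.inl ⟨h, h'⟩
        · rcases tot2 u v huv with h' | h'
          · exact Or.inr ⟨h, h'⟩
          · exact absurd ⟨h, h'⟩ hn2
    -- downsets
    set D : V → Finset V := fun v => Finset.univ.filter (fun w => P w v) with hD
    have memD : ∀ w v : V, w ∈ D v ↔ P w v := by
      intro w v; simp [hD]
    -- downsets form a chain
    have hchain : ∀ u v : V, D u ⊆ D v ∨ D v ⊆ D u := by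
      intro u v
      by_contra hc
      push_neg at hc
      obtain ⟨a, hau, hav⟩ := Finset.not_subset.mp hc.1
      obtain ⟨b, hbv, hbu⟩ := Finset.not_subset.mp hc.2
      rw [memD] at hau hbv
      simp only [memD] at hav hbu
      -- derive incomparabilities
      have hva : ¬ P v a := fun h => hbu (Ptr _ _ _ (Ptr _ _ _ hbv h) hau)
      have hub : ¬ P u b := fun h => hav (Ptr _ _ _ (Ptr _ _ _ hau h) hbv)
      have hnab : ¬ P a b := fun h => hav (Ptr _ _ _ h hbv)
      have hnba : ¬ P b a := fun h => hbu (Ptr _ _ _ h hau)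
      have hnuv : ¬ P u v := fun h => hav (Ptr _ _ _ hau h)
      have hnvu : ¬ P v u := fun h => hbu (Ptr _ _ _ hbv h)
      -- nonequalities
      have neab : a ≠ b := by rintro rfl; exact hbu hau
      have neau : a ≠ u := Pne _ _ hau
      have neav : a ≠ v := by rintro rfl; exact hbu (Ptr _ _ _ hbv hau)
      have nebu : b ≠ u := by rintro rfl; exact hav (Ptr _ _ _ hau hbv)
      have nebv : b ≠ v := Pne _ _ hbv
      have neuv : u ≠ v := by rintro rfl; exact hav hau
      exact hC4 ⟨a, b, u, v, neab, neau, neav, nebu, nebv, neuv,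
        (adjP a b neab).mpr ⟨hnab, hnba⟩,
        (adjP b u nebu).mpr ⟨hbu, hub⟩,
        (adjP u v neuv).mpr ⟨hnuv, hnvu⟩,
        (adjP v a (Ne.symm neav)).mpr ⟨hva, hav⟩,
        fun h => ((adjP a u neau).mp h).1 hau,
        fun h => ((adjP b v nebv).mp h).1 hbv⟩
    -- endpoints
    set loN : V → ℕ := fun v => (D v).card with hloN
    set hiN : V → ℕ := fun v =>
      Finset.sup (Finset.univ.filter (fun w => ¬ P v w)) (fun w => (D w).card) with hhiN
    have hmemself : ∀ v : V, v ∈ Finset.univ.filter (fun w => ¬ P v w) := by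
      intro v; simp [Pirr v]
    have hlohi : ∀ v, loN v ≤ hiN v := fun v =>
      Finset.le_sup (f := fun w => (D w).card) (hmemself v)
    have hkey : ∀ v w : V, P v w ↔ hiN v < loN w := by
      intro v w
      constructor
      · intro hvw
        have hpos : 0 < loN w := Finset.card_pos.mpr ⟨v, (memD v w).mpr hvw⟩
        rw [hhiN]
        refine Finset.sup_lt_iff hpos |>.mpr ?_
        intro x hx
        rw [Finset.mem_filter] at hx
        have hnvx : ¬ P v x := hx.2
        have hxw : D x ⊆ D w := by
          rcases hchain x w with h | h
          · exact h
          · exact absurd ((memD v x).mp (h ((memD v w).mpr hvw))) hnvx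
        exact Finset.card_lt_card ⟨hxw, fun hwx =>
          hnvx ((memD v x).mp (hwx ((memD v w).mpr hvw)))⟩
      · intro h
        by_contra hnvw
        have : loN w ≤ hiN v :=
          Finset.le_sup (f := fun w => (D w).card)
            (Finset.mem_filter.mpr ⟨Finset.mem_univ w, hnvw⟩)
        omega
    refine ⟨fun v => (loN v : ℝ), fun v => (hiN v : ℝ),
      fun v => Nat.cast_le.mpr (hlohi v), ?_⟩
    intro u v huv
    rw [adjP u v huv, Set.Icc_inter_Icc, Set.nonempty_Icc]
    constructor
    · rintro ⟨h1, h2⟩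
      have h1' : loN v ≤ hiN u := by
        have := (hkey u v).not.mp h1; omega
      have h2' : loN u ≤ hiN v := by
        have := (hkey v u).not.mp h2; omega
      have a1 := hlohi u
      have a2 := hlohi v
      simp only [sup_le_iff, le_inf_iff]
      refine ⟨⟨?_, ?_⟩, ⟨?_, ?_⟩⟩ <;> exact_mod_cast (by omega : _ ≤ _)
    · intro h
      simp only [sup_le_iff, le_inf_iff] at h
      have h1 : loN v ≤ hiN u := by exact_mod_cast h.1.2
      have h2 : loN u ≤ hiN v := by exact_mod_cast h.2.1
      exact ⟨fun hp => by have := (hkey u v).mp hp; omega,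
             fun hp => by have := (hkey v u).mp hp; omega⟩
end

section
/- For every cubic graph G with vertex ordering v_1,…,v_n (n ≥ 4) and edge ordering e_1,…,e_m, and all positive integers p, q, p', q', the reduction graph G' is a permutation graph. -/
/-- The vertices of the reduction graph `G'`: for each `i ∈ [n]` a `(p,q)`-grained
gadget `H_i` with parts `K'_i` (`vK1`), `K''_i` (`vK2`), `S'_i` (`vS1`), `S''_i` (`vS2`);
for each `j ∈ [m]` a `(p',q')`-grained gadget `E_j` with parts `K'ᵉ_j` (`eK1`),
`K''ᵉ_j` (`eK2`), `S'ᵉ_j` (`eS1`), `S''ᵉ_j` (`eS2`); and for each `j ∈ [m]` four link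
vertices `link lr s j`, where `lr = false` selects the smaller endpoint index of the
edge `e_j` and `lr = true` the larger one, and `s` distinguishes `L¹` (`s = false`)
from `L²` (`s = true`). -/
inductive RVert (n m p q p' q' : ℕ) : Type where
  | vK1 : Fin n → Fin q → RVert n m p q p' q'
  | vK2 : Fin n → Fin q → RVert n m p q p' q'
  | vS1 : Fin n → Fin p → RVert n m p q p' q'
  | vS2 : Fin n → Fin p → RVert n m p q p' q'
  | eK1 : Fin m → Fin q' → RVert n m p q p' q'
  | eK2 : Fin m → Fin q' → RVert n m p q p' q'
  | eS1 : Fin m → Fin p' → RVert n m p q p' q'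
  | eS2 : Fin m → Fin p' → RVert n m p q p' q'
  | link : Bool → Bool → Fin m → RVert n m p q p' q'
  deriving DecidableEq

/-- Given the two endpoint functions `ep1 ep2 : Fin m → Fin n` of the ordered edges
(`ep1 j < ep2 j`), the vertex index associated with the link vertex `link lr s j`. -/
def linkIdx {n m : ℕ} (ep1 ep2 : Fin m → Fin n) (lr : Bool) (j : Fin m) : Fin n :=
  if lr then ep2 j else ep1 j

/-- One-directional description of the adjacencies of the reduction graph `G'`. -/
def radj {n m p q p' q' : ℕ} (ep1 ep2 : Fin m → Fin n) :
    RVert n m p q p' q' → RVert n m p q p' q' → Prop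
  | .vK1 i _, .vK1 i' _ => i = i'
  | .vK1 i _, .vK2 i' _ => i = i'
  | .vK2 i _, .vK2 i' _ => i = i'
  | .vK1 i _, .vS1 i' _ => i = i'
  | .vK2 i _, .vS2 i' _ => i = i'
  | .eK1 j _, .eK1 j' _ => j = j'
  | .eK1 j _, .eK2 j' _ => j = j'
  | .eK2 j _, .eK2 j' _ => j = j'
  | .eK1 j _, .eS1 j' _ => j = j'
  | .eK2 j _, .eS2 j' _ => j = j'
  | .link lr _ j, .vK1 k _ => linkIdx ep1 ep2 lr j < k
  | .link lr _ j, .vK2 k _ => linkIdx ep1 ep2 lr j ≤ k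
  | .link lr _ j, .vS1 k _ => linkIdx ep1 ep2 lr j < k
  | .link lr _ j, .vS2 k _ => linkIdx ep1 ep2 lr j < k
  | .link _ _ j, .eK1 l _ => l ≤ j
  | .link _ _ j, .eK2 l _ => l < j
  | .link lr _ j, .eS1 l _ => l < j ∨ (l = j ∧ lr = false)
  | .link _ _ j, .eS2 l _ => l < j
  | .link lr _ j, .link lr' _ l =>
      (linkIdx ep1 ep2 lr j < linkIdx ep1 ep2 lr' l ∧ l ≤ j) ∨
      (linkIdx ep1 ep2 lr' l < linkIdx ep1 ep2 lr j ∧ j ≤ l) ∨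
      (linkIdx ep1 ep2 lr j = linkIdx ep1 ep2 lr' l ∧ j = l)
  | _, _ => False

/-- The reduction graph `G'`. -/
def reductionGraph (n m p q p' q' : ℕ) (ep1 ep2 : Fin m → Fin n) :
    SimpleGraph (RVert n m p q p' q') where
  Adj u v := u ≠ v ∧ (radj ep1 ep2 u v ∨ radj ep1 ep2 v u)
  symm := ⟨fun u v h => ⟨h.1.symm, h.2.symm⟩⟩
  loopless := ⟨fun u h => h.1 rfl⟩


/-!
Both orders list the vertex gadgets `H_1, …, H_n` before the edge gadgets `E_1, …, E_m`, so
distinct gadgets are never adjacent. A grained gadget on its own is realised by the orders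
`K' S' S'' K''` and `S' K''↓ K'↓ S''`, where `↓` means reversed. The link vertex of `(v_a, e_j)`
is placed inside `H_a`, just before `K''_a`, in the first order, and inside `E_j` in the second:
after `K'ᵉ_j`, and before `S'ᵉ_j` exactly when `v_a` is the larger endpoint of `e_j`. Among
themselves, link vertices are sorted by `(a, j, s)` in the first order and by
`(j, larger endpoint first, s reversed)` in the second, which yields rule (v).
-/

open Function

theorem IsPermutationGraph.of_keys {V : Type} {α β : Type*} [LinearOrder α] [LinearOrder β]
    {G : SimpleGraph V} (f : V → α) (g : V → β) (hf : Injective f) (hg : Injective g)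
    (hadj : ∀ u v, u ≠ v → (G.Adj u v ↔ (f u < f v ∧ g v < g u) ∨ (f v < f u ∧ g u < g v))) :
    IsPermutationGraph G :=
  ⟨LinearOrder.lift' f hf, LinearOrder.lift' g hg, hadj⟩

namespace RVert

variable {n m p q p' q' : ℕ}

def firstKey (ep1 ep2 : Fin m → Fin n) : RVert n m p q p' q' → List ℤ
  | vK1 i t => [0, i, 0, t]
  | vS1 i t => [0, i, 1, t]
  | vS2 i t => [0, i, 2, t]
  | link lr s j => [0, linkIdx ep1 ep2 lr j, 3, j, if s then 1 else 0]
  | vK2 i t => [0, i, 4, t]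
  | eS1 j t => [1, j, 0, t]
  | eK2 j t => [1, j, 1, -t]
  | eK1 j t => [1, j, 2, -t]
  | eS2 j t => [1, j, 3, t]

def secondKey : RVert n m p q p' q' → List ℤ
  | vS1 i t => [0, i, 0, t]
  | vK2 i t => [0, i, 1, -t]
  | vK1 i t => [0, i, 2, -t]
  | vS2 i t => [0, i, 3, t]
  | eK1 j t => [1, j, 0, t]
  | link lr s j => [1, j, if lr then 1 else 3, if s then 0 else 1]
  | eS1 j t => [1, j, 2, t]
  | eS2 j t => [1, j, 4, t]
  | eK2 j t => [1, j, 5, t]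

theorem firstKey_injective (ep1 ep2 : Fin m → Fin n) (hlt : ∀ j, ep1 j < ep2 j) :
    Injective (firstKey ep1 ep2 : RVert n m p q p' q' → _) := by
  intro u v h
  cases u <;> cases v <;>
    simp only [firstKey, linkIdx, List.cons.injEq, Nat.cast_inj, Fin.val_inj, and_true] at h <;>
    grind

theorem secondKey_injective : Injective (secondKey : RVert n m p q p' q' → _) := by
  intro u v h
  cases u <;> cases v <;>
    simp only [secondKey, List.cons.injEq, Nat.cast_inj, Fin.val_inj, and_true] at h <;>
    grind

theorem reductionGraph_adj_iff (ep1 ep2 : Fin m → Fin n) (hlt : ∀ j, ep1 j < ep2 j)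
    (u v : RVert n m p q p' q') (huv : u ≠ v) :
    (reductionGraph n m p q p' q' ep1 ep2).Adj u v ↔
      (firstKey ep1 ep2 u < firstKey ep1 ep2 v ∧ secondKey v < secondKey u) ∨
        (firstKey ep1 ep2 v < firstKey ep1 ep2 u ∧ secondKey u < secondKey v) := by
  simp only [reductionGraph, ne_eq, huv, not_false_eq_true, true_and]
  cases u <;> cases v <;>
    simp only [ne_eq, link.injEq, Fin.ext_iff] at huv <;>
    simp only [radj, firstKey, secondKey, linkIdx, List.cons_lt_cons_iff, List.not_lt_nil,
      Fin.ext_iff, Fin.lt_def, Fin.le_def] <;>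
    grind

end RVert

theorem reductionGraph_isPermutationGraph_general (n m : ℕ)
    (ep1 ep2 : Fin m → Fin n) (hlt : ∀ j, ep1 j < ep2 j)
    (p q p' q' : ℕ) :
    IsPermutationGraph (reductionGraph n m p q p' q' ep1 ep2) :=
  .of_keys _ _ (RVert.firstKey_injective ep1 ep2 hlt) RVert.secondKey_injective
    (RVert.reductionGraph_adj_iff ep1 ep2 hlt)

/-- the reduction graph `G'` is a permutation graph. -/
theorem reductionGraph_isPermutationGraph (n m : ℕ) (hn : 4 ≤ n) (G : SimpleGraph (Fin n))
    (hcubic : ∀ v : Fin n, (G.neighborSet v).ncard = 3)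
    (ep1 ep2 : Fin m → Fin n) (hlt : ∀ j, ep1 j < ep2 j)
    (hedges : ∀ u v : Fin n,
      G.Adj u v ↔ ∃ j, (ep1 j = u ∧ ep2 j = v) ∨ (ep1 j = v ∧ ep2 j = u))
    (hinj : Function.Injective fun j => (ep1 j, ep2 j))
    (p q p' q' : ℕ) (hp : 0 < p) (hq : 0 < q) (hp' : 0 < p') (hq' : 0 < q') :
    IsPermutationGraph (reductionGraph n m p q p' q' ep1 ep2) :=
  reductionGraph_isPermutationGraph_general n m ep1 ep2 hlt p q p' q'
end

section
/- For every cubic graph G with vertex ordering v_1,…,v_n (n ≥ 4) and edge ordering e_1,…,e_m, and all positive integers p, q, p', q', the reduction graph G' is not an interval graph. -/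
/-!
Interval graphs contain no induced 4-cycle: if the intervals of `a` and `c` are disjoint, say
`I a` lies left of `I c`, then the intervals of the two common neighbours `b` and `d` both
contain the right end of `I a`. In `G'`, any vertex `v` of `G` lies on two edges `e_j`, `e_l`
with `j < l`, and `K''_v`, the link vertex of `(v, e_j)`, `K'ᵉ_j`, the link vertex of
`(v, e_l)` form such an induced 4-cycle.
-/

lemma Set.Icc_inter_Icc_nonempty_iff_of_le {α : Type*} [Lattice α] {a b c d : α} (hab : a ≤ b) (hcd : c ≤ d) :
    (Set.Icc a b ∩ Set.Icc c d).Nonempty ↔ a ≤ d ∧ c ≤ b := by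
  rw [Set.Icc_inter_Icc, Set.nonempty_Icc, sup_le_iff, le_inf_iff, le_inf_iff]
  exact ⟨fun h => ⟨h.1.2, h.2.1⟩, fun h => ⟨⟨hab, h.1⟩, h.2, hcd⟩⟩

namespace IsIntervalGraph

variable {V : Type} {G : SimpleGraph V}

lemma exists_endpoints (hG : IsIntervalGraph G) :
    ∃ lo hi : V → ℝ, ∀ u v, u ≠ v → (G.Adj u v ↔ lo u ≤ hi v ∧ lo v ≤ hi u) := by
  obtain ⟨lo, hi, hle, hadj⟩ := hG
  exact ⟨lo, hi, fun u v huv => (hadj u v huv).trans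
    (Set.Icc_inter_Icc_nonempty_iff_of_le (hle u) (hle v))⟩

lemma adj_of_cycle_four (hG : IsIntervalGraph G) {a b c d : V}
    (hab : G.Adj a b) (hbc : G.Adj b c) (hcd : G.Adj c d) (hda : G.Adj d a)
    (hac : a ≠ c) (hnac : ¬ G.Adj a c) (hbd : b ≠ d) : G.Adj b d := by
  obtain ⟨lo, hi, hadj⟩ := hG.exists_endpoints
  obtain ⟨hab₁, hab₂⟩ := (hadj a b hab.ne).mp hab
  obtain ⟨hbc₁, hbc₂⟩ := (hadj b c hbc.ne).mp hbc
  obtain ⟨hcd₁, hcd₂⟩ := (hadj c d hcd.ne).mp hcd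
  obtain ⟨hda₁, hda₂⟩ := (hadj d a hda.ne).mp hda
  rw [hadj a c hac, not_and_or, not_le, not_le] at hnac
  rw [hadj b d hbd]
  constructor <;> rcases hnac with h | h <;> linarith

end IsIntervalGraph

section ReductionGraph

variable {n m p q p' q' : ℕ} {ep1 ep2 : Fin m → Fin n}

lemma reductionGraph_adj_vK2_link {k : Fin n} {x : Fin q} {lr s : Bool} {j : Fin m} :
    (reductionGraph n m p q p' q' ep1 ep2).Adj (.vK2 k x) (.link lr s j) ↔
      linkIdx ep1 ep2 lr j ≤ k := by
  simp [reductionGraph, radj]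

lemma reductionGraph_adj_link_eK1 {lr s : Bool} {j l : Fin m} {x : Fin q'} :
    (reductionGraph n m p q p' q' ep1 ep2).Adj (.link lr s j) (.eK1 l x) ↔ l ≤ j := by
  simp [reductionGraph, radj]

lemma reductionGraph_not_adj_vK2_eK1 {k : Fin n} {x : Fin q} {l : Fin m} {y : Fin q'} :
    ¬ (reductionGraph n m p q p' q' ep1 ep2).Adj (.vK2 k x) (.eK1 l y) := by
  simp [reductionGraph, radj]

lemma reductionGraph_not_adj_link_link {lr lr' s s' : Bool} {j l : Fin m}
    (hidx : linkIdx ep1 ep2 lr j = linkIdx ep1 ep2 lr' l) (hjl : j ≠ l) :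
    ¬ (reductionGraph n m p q p' q' ep1 ep2).Adj (.link lr s j) (.link lr' s' l) := by
  simp [reductionGraph, radj, hidx, hjl, hjl.symm]

lemma reductionGraph_not_isIntervalGraph_of_lt (hq : 0 < q) (hq' : 0 < q') {lr lr' : Bool}
    {j l : Fin m} (hjl : j < l) (hidx : linkIdx ep1 ep2 lr j = linkIdx ep1 ep2 lr' l) :
    ¬ IsIntervalGraph (reductionGraph n m p q p' q' ep1 ep2) := by
  intro hG
  set v := linkIdx ep1 ep2 lr j
  have hbd := hG.adj_of_cycle_four (a := .vK2 v ⟨0, hq⟩) (b := .link lr false j)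
    (c := .eK1 j ⟨0, hq'⟩) (d := .link lr' false l)
    (reductionGraph_adj_vK2_link.mpr le_rfl)
    (reductionGraph_adj_link_eK1.mpr le_rfl)
    (reductionGraph_adj_link_eK1.mpr hjl.le).symm
    (reductionGraph_adj_vK2_link.mpr hidx.ge).symm
    (by simp) reductionGraph_not_adj_vK2_eK1 (by simp [hjl.ne])
  exact reductionGraph_not_adj_link_link hidx hjl.ne hbd

end ReductionGraph

lemma exists_linkIdx_eq_of_adj {n m : ℕ} {G : SimpleGraph (Fin n)} {ep1 ep2 : Fin m → Fin n}
    (hedges : ∀ u v : Fin n,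
      G.Adj u v ↔ ∃ j, (ep1 j = u ∧ ep2 j = v) ∨ (ep1 j = v ∧ ep2 j = u))
    {u v : Fin n} (huv : G.Adj u v) :
    ∃ j lr, linkIdx ep1 ep2 lr j = u ∧ linkIdx ep1 ep2 (!lr) j = v := by
  obtain ⟨j, ⟨h₁, h₂⟩ | ⟨h₁, h₂⟩⟩ := (hedges u v).mp huv
  exacts [⟨j, false, h₁, h₂⟩, ⟨j, true, h₂, h₁⟩]

lemma exists_ne_linkIdx_eq {n m : ℕ} {G : SimpleGraph (Fin n)} {ep1 ep2 : Fin m → Fin n}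
    (hedges : ∀ u v : Fin n,
      G.Adj u v ↔ ∃ j, (ep1 j = u ∧ ep2 j = v) ∨ (ep1 j = v ∧ ep2 j = u))
    {v : Fin n} (hv : 1 < (G.neighborSet v).ncard) :
    ∃ j l lr lr', j ≠ l ∧ linkIdx ep1 ep2 lr j = v ∧ linkIdx ep1 ep2 lr' l = v := by
  obtain ⟨u₁, hu₁, u₂, hu₂, hu⟩ := (Set.one_lt_ncard (Set.toFinite _)).mp hv
  obtain ⟨j, lr, hv₁, hj⟩ := exists_linkIdx_eq_of_adj hedges hu₁
  obtain ⟨l, lr', hv₂, hl⟩ := exists_linkIdx_eq_of_adj hedges hu₂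
  refine ⟨j, l, lr, lr', ?_, hv₁, hv₂⟩
  rintro rfl
  by_cases hlr : lr = lr'
  · subst hlr
    exact hu (hj.symm.trans hl)
  · rw [Bool.eq_not.mpr (Ne.symm hlr)] at hv₂
    exact G.ne_of_adj hu₁ (hv₂.symm.trans hj)

theorem reductionGraph_not_isIntervalGraph_general (n m : ℕ) (hn : 4 ≤ n) (G : SimpleGraph (Fin n))
    (hcubic : ∀ v : Fin n, (G.neighborSet v).ncard = 3)
    (ep1 ep2 : Fin m → Fin n)
    (hedges : ∀ u v : Fin n,
      G.Adj u v ↔ ∃ j, (ep1 j = u ∧ ep2 j = v) ∨ (ep1 j = v ∧ ep2 j = u))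
    (p q p' q' : ℕ) (hq : 0 < q) (hq' : 0 < q') :
    ¬ IsIntervalGraph (reductionGraph n m p q p' q' ep1 ep2) := by
  obtain ⟨j, l, lr, lr', hjl, hj, hl⟩ :=
    exists_ne_linkIdx_eq hedges (v := ⟨0, by omega⟩) (by rw [hcubic]; norm_num)
  rcases hjl.lt_or_gt with hjl | hlj
  · exact reductionGraph_not_isIntervalGraph_of_lt hq hq' hjl (hj.trans hl.symm)
  · exact reductionGraph_not_isIntervalGraph_of_lt hq hq' hlj (hl.trans hj.symm)

/-- the reduction graph `G'` is not an interval graph. -/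
theorem reductionGraph_not_isIntervalGraph (n m : ℕ) (hn : 4 ≤ n) (G : SimpleGraph (Fin n))
    (hcubic : ∀ v : Fin n, (G.neighborSet v).ncard = 3)
    (ep1 ep2 : Fin m → Fin n) (hlt : ∀ j, ep1 j < ep2 j)
    (hedges : ∀ u v : Fin n,
      G.Adj u v ↔ ∃ j, (ep1 j = u ∧ ep2 j = v) ∨ (ep1 j = v ∧ ep2 j = u))
    (hinj : Function.Injective fun j => (ep1 j, ep2 j))
    (p q p' q' : ℕ) (hp : 0 < p) (hq : 0 < q) (hp' : 0 < p') (hq' : 0 < q') :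
    ¬ IsIntervalGraph (reductionGraph n m p q p' q' ep1 ep2) :=
  reductionGraph_not_isIntervalGraph_general n m hn G hcubic ep1 ep2 hedges p q p' q' hq hq'
end

section
/- Let G be a cubic graph with vertex ordering v_1,…,v_n (n ≥ 4) and edge ordering e_1,…,e_m, let the parameters be q' = 5n² + 1, p' = 11n² + 6n, q = 12n² + 12n + 1, p = 25n² + 30n, and let G' be the reduction graph. Let [A,B] be a maximum cut of G'. Then for each vertex v_i ∈ V(G), if K''_i ⊆ A, then every link vertex associated with v_i belongs to B. -/
/-!
With signs `±1` for the two sides, moving a vertex set `M` to the other side changes the cut by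
the number of uncut minus cut edges between `M` and its complement, so in a maximum cut this
signed count is never positive. Applied to single vertices, to the ends of a cut edge and to
the half `K'' ∪ S''` of a grained gadget, it shows that in every gadget `K'` and `S'` lie
entirely on opposite sides, as do `K''` and `S''`, and that `K' ∪ K''` is not in `A` while
`S' ∪ S''` is in `B`. Hence each gadget has at least as many vertices in `A` as in `B`, and
`K'ᵉ ∪ S'ᵉ` has at most `p' - q'` more in `B`. A link vertex `L ∈ A` of `v_i` with `K''_i ⊆ A`
then sees the `q` vertices of `K''_i` in `A`, which outweigh its at most `4m ≤ 6n` link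
neighbours and its neighbours in `E_j`; moving `L` to `B` would enlarge the cut.
-/

open Finset

section Cut

open scoped Classical

variable {V : Type}

noncomputable def cutSign (A : Set V) (v : V) : ℤ := if v ∈ A then 1 else -1

noncomputable def partSum {ι : Type*} [Fintype ι] (A : Set V) (f : ι → V) : ℤ :=
  ∑ i, cutSign A (f i)

noncomputable def nbrSignOn [Fintype V] (G : SimpleGraph V) (A : Set V) (s : Finset V) (u : V) :
    ℤ :=
  ∑ v ∈ s, if G.Adj u v then cutSign A v else 0

variable {G : SimpleGraph V} {A B : Set V} {u v : V}

theorem cutSign_of_mem (h : v ∈ A) : cutSign A v = 1 := if_pos h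

theorem cutSign_of_notMem (h : v ∉ A) : cutSign A v = -1 := if_neg h

theorem cutSign_le_one (A : Set V) (v : V) : cutSign A v ≤ 1 := by
  unfold cutSign
  split_ifs <;> norm_num

section Parts

variable {ι : Type*} [Fintype ι] {f : ι → V}

theorem partSum_of_forall_mem (h : ∀ i, f i ∈ A) : partSum A f = Fintype.card ι := by
  simp [partSum, cutSign_of_mem (h _)]

theorem partSum_of_forall_notMem (h : ∀ i, f i ∉ A) : partSum A f = -Fintype.card ι := by
  simp [partSum, cutSign_of_notMem (h _)]

theorem abs_sum_ite_cutSign_le (P : ι → Prop) [DecidablePred P] (f : ι → V) :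
    |∑ i, if P i then cutSign A (f i) else 0| ≤ Fintype.card ι := by
  refine (abs_sum_le_sum_abs _ _).trans <|
    (sum_le_sum (g := fun _ => (1 : ℤ)) fun i _ => ?_).trans (by simp)
  unfold cutSign
  split_ifs <;> norm_num

theorem abs_partSum_le : |partSum A f| ≤ Fintype.card ι := by
  simpa [partSum] using abs_sum_ite_cutSign_le (A := A) (fun _ => True) f

end Parts

theorem IsMaxCut.compl_eq (hmax : IsMaxCut G A B) : B = Aᶜ :=
  (IsCompl.compl_eq ⟨hmax.2.1, codisjoint_iff.mpr hmax.1⟩).symm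

variable [Fintype V]

theorem nbrSignOn_add_nbrSignOn_compl (s : Finset V) (u : V) :
    nbrSignOn G A s u + nbrSignOn G A sᶜ u = nbrSignOn G A univ u :=
  sum_add_sum_compl s _

theorem nbrSignOn_univ_of_adj_iff {R : V → V → Prop} [DecidableRel R]
    (hR : ∀ u v, G.Adj u v ↔ u ≠ v ∧ R u v) (u : V) :
    nbrSignOn G A univ u =
      ∑ v, (if R u v then cutSign A v else 0) - if R u u then cutSign A u else 0 := by
  have h : ∀ v, (if R u v then cutSign A v else 0) = (if G.Adj u v then cutSign A v else 0) +
      if u = v then (if R u v then cutSign A v else 0) else 0 := by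
    intro v
    by_cases huv : u = v <;> simp [hR, huv]
  rw [sum_congr rfl fun v _ => h v, sum_add_distrib, sum_ite_eq]
  simp [nbrSignOn]

theorem four_mul_cutSize (A : Set V) :
    4 * (cutSize G A Aᶜ : ℤ) =
      ∑ u, ∑ v, if G.Adj u v then 1 - cutSign A u * cutSign A v else 0 := by
  set χ : V → V → ℤ := fun u v => if u ∈ A ∧ v ∉ A ∧ G.Adj u v then 1 else 0
  have hcut : (cutSize G A Aᶜ : ℤ) = ∑ u, ∑ v, χ u v := by
    rw [cutSize, Set.ncard_eq_toFinset_card', ← Fintype.sum_prod_type', card_eq_sum_ones,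
      Nat.cast_sum, ← sum_filter]
    simp
  have hpt : ∀ u v, (if G.Adj u v then 1 - cutSign A u * cutSign A v else 0) =
      2 * (χ u v + χ v u) := by
    intro u v
    by_cases hadj : G.Adj u v
    · by_cases hu : u ∈ A <;> by_cases hv : v ∈ A <;>
        simp [χ, cutSign, hadj, hadj.symm, hu, hv]
    · have hadj' : ¬G.Adj v u := fun h => hadj h.symm
      simp [χ, hadj, hadj']
  simp only [hpt, hcut, ← mul_sum, sum_add_distrib]
  rw [sum_comm (f := fun u v => χ v u)]
  ring

/-- The left-hand side counts uncut minus cut edges between `M` and `Mᶜ`: it is the gain of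
moving `M` to the other side. -/
theorem IsMaxCut.sum_cutSign_mul_nbrSignOn_compl_nonpos (hmax : IsMaxCut G A B)
    (M : Finset V) : ∑ u ∈ M, cutSign A u * nbrSignOn G A Mᶜ u ≤ 0 := by
  set A' : Set V := symmDiff A M
  set ε : V → ℤ := fun v => if v ∈ M then -1 else 1
  have hsign : ∀ v, cutSign A' v = ε v * cutSign A v := by
    intro v
    by_cases hv : v ∈ M <;> by_cases hvA : v ∈ A <;>
      simp [A', ε, cutSign, Set.mem_symmDiff, hv, hvA]
  set χ : V → V → ℤ := fun u v =>
    if u ∈ M ∧ v ∉ M ∧ G.Adj u v then cutSign A u * cutSign A v else 0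
  have hpt : ∀ u v, (if G.Adj u v then 1 - cutSign A' u * cutSign A' v else 0) -
      (if G.Adj u v then 1 - cutSign A u * cutSign A v else 0) = 2 * (χ u v + χ v u) := by
    intro u v
    by_cases hadj : G.Adj u v
    · by_cases hu : u ∈ M <;> by_cases hv : v ∈ M <;>
        simp [χ, ε, hsign, hadj, hadj.symm, hu, hv] <;> ring
    · have hadj' : ¬G.Adj v u := fun h => hadj h.symm
      simp [χ, hadj, hadj']
  have hχ : ∑ u, ∑ v, χ u v = ∑ u ∈ M, cutSign A u * nbrSignOn G A Mᶜ u := by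
    have hout : ∑ u ∈ Mᶜ, ∑ v, χ u v = 0 :=
      sum_eq_zero fun u hu => sum_eq_zero fun v _ => by simp [χ, mem_compl.mp hu]
    rw [← sum_add_sum_compl M, hout, add_zero]
    refine sum_congr rfl fun u hu => ?_
    have hin : ∑ v ∈ M, χ u v = 0 := sum_eq_zero fun v hv => by simp [χ, hv]
    rw [← sum_add_sum_compl M, hin, zero_add, nbrSignOn, mul_sum]
    exact sum_congr rfl fun v hv => by simp [χ, hu, mem_compl.mp hv, mul_ite]
  have hle : (cutSize G A' A'ᶜ : ℤ) ≤ cutSize G A Aᶜ := by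
    exact_mod_cast hmax.compl_eq ▸ hmax.2.2 A' A'ᶜ (Set.union_compl_self A') disjoint_compl_right
  have hdiff := congrArg₂ (· - ·) (four_mul_cutSize (G := G) A') (four_mul_cutSize (G := G) A)
  simp only [← sum_sub_distrib, hpt, ← mul_sum, sum_add_distrib] at hdiff
  rw [sum_comm (f := fun u v => χ v u), hχ] at hdiff
  linarith

theorem IsMaxCut.cutSign_mul_nbrSignOn_nonpos (hmax : IsMaxCut G A B) (u : V) :
    cutSign A u * nbrSignOn G A univ u ≤ 0 := by
  have h := hmax.sum_cutSign_mul_nbrSignOn_compl_nonpos {u}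
  have hu : nbrSignOn G A {u} u = 0 := by simp [nbrSignOn]
  rw [← nbrSignOn_add_nbrSignOn_compl {u}, hu, zero_add]
  simpa using h

theorem IsMaxCut.nbrSignOn_sub_nbrSignOn_add_two_nonpos (hmax : IsMaxCut G A B)
    (hadj : G.Adj u v) (hu : u ∈ A) (hv : v ∉ A) :
    nbrSignOn G A univ u - nbrSignOn G A univ v + 2 ≤ 0 := by
  have h := hmax.sum_cutSign_mul_nbrSignOn_compl_nonpos {u, v}
  have hu' : nbrSignOn G A {u, v} u = -1 := by
    simp [nbrSignOn, sum_pair hadj.ne, hadj, cutSign_of_notMem hv]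
  have hv' : nbrSignOn G A {u, v} v = 1 := by
    simp [nbrSignOn, sum_pair hadj.ne, hadj.symm, cutSign_of_mem hu]
  rw [sum_pair hadj.ne, cutSign_of_mem hu, cutSign_of_notMem hv] at h
  rw [← nbrSignOn_add_nbrSignOn_compl {u, v} u, ← nbrSignOn_add_nbrSignOn_compl {u, v} v, hu',
    hv']
  linarith

end Cut

section Gadget

open scoped Classical

variable {V : Type} [Fintype V] {G : SimpleGraph V} {A B : Set V} {p q : ℕ}

/- If `S` were split, the single-vertex inequalities on both sides would give
`partSum A K = -y`, so `K` would be split too; then moving across either the ends of a cut edge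
`K a ∈ A`, `S b ∉ A` or those of a cut edge `S b' ∈ A`, `K a' ∉ A` gains. -/
theorem IsMaxCut.opposite_sides_of_join (hmax : IsMaxCut G A B) {K : Fin q → V}
    {S : Fin p → V} {y z : ℤ} (hKS : ∀ a b, G.Adj (K a) (S b))
    (hK : ∀ a, nbrSignOn G A univ (K a) = partSum A K + partSum A S + z - cutSign A (K a))
    (hS : ∀ b, nbrSignOn G A univ (S b) = partSum A K + y)
    (hy : |y| < q) (hp : q + |z| + 1 < p) :
    (∀ a, K a ∉ A) ∧ (∀ b, S b ∈ A) ∨ (∀ a, K a ∈ A) ∧ (∀ b, S b ∉ A) := by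
  have hα := abs_le.mp (abs_partSum_le (A := A) (f := K))
  have hz := neg_abs_le z
  have hz' := le_abs_self z
  simp only [Fintype.card_fin] at hα
  have hS_mono : (∀ b, S b ∈ A) ∨ (∀ b, S b ∉ A) := by
    by_contra! h
    obtain ⟨⟨b, hb⟩, ⟨b', hb'⟩⟩ := h
    have h1 := hmax.cutSign_mul_nbrSignOn_nonpos (S b')
    have h2 := hmax.cutSign_mul_nbrSignOn_nonpos (S b)
    rw [cutSign_of_mem hb', hS] at h1
    rw [cutSign_of_notMem hb, hS] at h2
    have hy' := abs_lt.mp hy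
    obtain ⟨a, ha⟩ : ∃ a, K a ∈ A := by
      by_contra! h
      have := partSum_of_forall_notMem h
      simp only [Fintype.card_fin] at this
      linarith
    obtain ⟨a', ha'⟩ : ∃ a', K a' ∉ A := by
      by_contra! h
      have := partSum_of_forall_mem h
      simp only [Fintype.card_fin] at this
      linarith
    have h3 := hmax.nbrSignOn_sub_nbrSignOn_add_two_nonpos (hKS a b) ha hb
    have h4 := hmax.nbrSignOn_sub_nbrSignOn_add_two_nonpos (hKS a' b').symm hb' ha'
    rw [hK, hS, cutSign_of_mem ha] at h3
    rw [hK, hS, cutSign_of_notMem ha'] at h4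
    linarith
  rcases hS_mono with hSA | hSA
  · refine .inl ⟨fun a ha => ?_, hSA⟩
    have h := hmax.cutSign_mul_nbrSignOn_nonpos (K a)
    rw [hK, cutSign_of_mem ha, partSum_of_forall_mem hSA] at h
    simp only [Fintype.card_fin] at h
    linarith
  · refine .inr ⟨fun a => by_contra fun ha => ?_, hSA⟩
    have h := hmax.cutSign_mul_nbrSignOn_nonpos (K a)
    rw [hK, cutSign_of_notMem ha, partSum_of_forall_notMem hSA] at h
    simp only [Fintype.card_fin] at h
    linarith

theorem IsMaxCut.partSum_mul_add_partSum_mul_nonpos (hmax : IsMaxCut G A B) {K : Fin q → V}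
    {S : Fin p → V} {u w : ℤ} (hSinj : Function.Injective S)
    (hKK : ∀ a a', G.Adj (K a) (K a') ↔ a ≠ a') (hKS : ∀ a b, G.Adj (K a) (S b))
    (hSS : ∀ b b', ¬G.Adj (S b) (S b'))
    (hK : ∀ a, nbrSignOn G A univ (K a) = partSum A K + partSum A S + u - cutSign A (K a))
    (hS : ∀ b, nbrSignOn G A univ (S b) = partSum A K + w) :
    partSum A K * u + partSum A S * w ≤ 0 := by
  have hKinj : Function.Injective K := fun a a' h => by
    by_contra hne
    exact G.loopless.irrefl (K a) (h ▸ (hKK a a').mpr hne)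
  set M := univ.image K ∪ univ.image S
  have hdisj : Disjoint (univ.image K) (univ.image S) := by
    simp only [disjoint_left, mem_image, mem_univ, true_and]
    rintro _ ⟨a, rfl⟩ ⟨b, hb⟩
    exact (hKS a b).ne hb.symm
  have hsum : ∀ g : V → ℤ, ∑ v ∈ M, g v = ∑ a, g (K a) + ∑ b, g (S b) := fun g => by
    rw [sum_union hdisj, sum_image hKinj.injOn, sum_image hSinj.injOn]
  have hKM : ∀ a, nbrSignOn G A Mᶜ (K a) = u := fun a => by
    have h := nbrSignOn_add_nbrSignOn_compl (G := G) (A := A) M (K a)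
    rw [nbrSignOn, hsum, hK] at h
    simp [hKK, hKS, sum_ite, filter_ne, sum_erase_eq_sub, partSum] at h
    linarith
  have hSM : ∀ b, nbrSignOn G A Mᶜ (S b) = w := fun b => by
    have h := nbrSignOn_add_nbrSignOn_compl (G := G) (A := A) M (S b)
    rw [nbrSignOn, hsum, hS] at h
    simp only [fun a => (hKS a b).symm, hSS, if_true, if_false] at h
    simp [partSum] at h
    linarith
  have h := hmax.sum_cutSign_mul_nbrSignOn_compl_nonpos M
  simpa only [hsum, hKM, hSM, ← sum_mul, partSum] using h

/-- `hflip` rules out `K1 ∪ K2 ⊆ A`, `S1 ∪ S2 ⊆ Aᶜ`, in which moving `K2 ∪ S2` across would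
gain. -/
theorem IsMaxCut.grainedGadget_balance (hmax : IsMaxCut G A B) {K1 K2 : Fin q → V}
    {S1 S2 : Fin p → V} {x1 x2 y1 y2 : ℤ} (hS2inj : Function.Injective S2)
    (hK2K2 : ∀ a a', G.Adj (K2 a) (K2 a') ↔ a ≠ a') (hK1S1 : ∀ a b, G.Adj (K1 a) (S1 b))
    (hK2S2 : ∀ a b, G.Adj (K2 a) (S2 b)) (hS2S2 : ∀ b b', ¬G.Adj (S2 b) (S2 b'))
    (hK1 : ∀ a, nbrSignOn G A univ (K1 a) =
      partSum A K1 + partSum A K2 + partSum A S1 + x1 - cutSign A (K1 a))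
    (hK2 : ∀ a, nbrSignOn G A univ (K2 a) =
      partSum A K1 + partSum A K2 + partSum A S2 + x2 - cutSign A (K2 a))
    (hS1 : ∀ b, nbrSignOn G A univ (S1 b) = partSum A K1 + y1)
    (hS2 : ∀ b, nbrSignOn G A univ (S2 b) = partSum A K2 + y2)
    (hy1 : |y1| < q) (hy2 : |y2| < q) (hx1 : 2 * q + |x1| + 1 < p) (hx2 : 2 * q + |x2| + 1 < p)
    (hflip : p * y2 < q * (q + x2)) :
    0 ≤ partSum A K1 + partSum A K2 + partSum A S1 + partSum A S2 ∧
      (q : ℤ) - p ≤ partSum A K1 + partSum A S1 := by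
  have hα := abs_le.mp (abs_partSum_le (A := A) (f := K1))
  have hβ := abs_le.mp (abs_partSum_le (A := A) (f := K2))
  simp only [Fintype.card_fin] at hα hβ
  have side1 := hmax.opposite_sides_of_join hK1S1 (z := partSum A K2 + x1)
    (fun a => by rw [hK1 a]; ring) hS1 hy1
    (by linarith [abs_add_le (partSum A K2) x1, abs_le.mpr hβ])
  have side2 := hmax.opposite_sides_of_join hK2S2 (z := partSum A K1 + x2)
    (fun a => by rw [hK2 a]; ring) hS2 hy2
    (by linarith [abs_add_le (partSum A K1) x2, abs_le.mpr hα])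
  have hgain := hmax.partSum_mul_add_partSum_mul_nonpos hS2inj hK2K2 hK2S2 hS2S2
    (u := partSum A K1 + x2) (fun a => by rw [hK2 a]; ring) hS2
  have hx1' := abs_nonneg x1
  rcases side1 with ⟨hK1A, hS1A⟩ | ⟨hK1A, hS1A⟩ <;>
    rcases side2 with ⟨hK2A, hS2A⟩ | ⟨hK2A, hS2A⟩ <;>
    simp only [partSum_of_forall_mem, partSum_of_forall_notMem, hK1A, hS1A, hK2A, hS2A,
      Fintype.card_fin, not_false_eq_true, implies_true] at hgain ⊢ <;>
    constructor <;> linarith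

end Gadget

namespace RVert

variable {n m p q p' q' : ℕ}

def equivSum : RVert n m p q p' q' ≃ (Fin n × Fin q) ⊕ (Fin n × Fin q) ⊕ (Fin n × Fin p) ⊕
    (Fin n × Fin p) ⊕ (Fin m × Fin q') ⊕ (Fin m × Fin q') ⊕ (Fin m × Fin p') ⊕
    (Fin m × Fin p') ⊕ (Bool × Bool × Fin m) where
  toFun
    | vK1 i a => .inl (i, a)
    | vK2 i a => .inr <| .inl (i, a)
    | vS1 i a => .inr <| .inr <| .inl (i, a)
    | vS2 i a => .inr <| .inr <| .inr <| .inl (i, a)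
    | eK1 l c => .inr <| .inr <| .inr <| .inr <| .inl (l, c)
    | eK2 l c => .inr <| .inr <| .inr <| .inr <| .inr <| .inl (l, c)
    | eS1 l c => .inr <| .inr <| .inr <| .inr <| .inr <| .inr <| .inl (l, c)
    | eS2 l c => .inr <| .inr <| .inr <| .inr <| .inr <| .inr <| .inr <| .inl (l, c)
    | link lr s j => .inr <| .inr <| .inr <| .inr <| .inr <| .inr <| .inr <| .inr (lr, s, j)
  invFun
    | .inl (i, a) => vK1 i a
    | .inr <| .inl (i, a) => vK2 i a
    | .inr <| .inr <| .inl (i, a) => vS1 i a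
    | .inr <| .inr <| .inr <| .inl (i, a) => vS2 i a
    | .inr <| .inr <| .inr <| .inr <| .inl (l, c) => eK1 l c
    | .inr <| .inr <| .inr <| .inr <| .inr <| .inl (l, c) => eK2 l c
    | .inr <| .inr <| .inr <| .inr <| .inr <| .inr <| .inl (l, c) => eS1 l c
    | .inr <| .inr <| .inr <| .inr <| .inr <| .inr <| .inr <| .inl (l, c) => eS2 l c
    | .inr <| .inr <| .inr <| .inr <| .inr <| .inr <| .inr <| .inr (lr, s, j) => link lr s j
  left_inv v := by cases v <;> rfl
  right_inv x := by rcases x with _ | _ | _ | _ | _ | _ | _ | _ | _ <;> rfl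

instance : Fintype (RVert n m p q p' q') := Fintype.ofEquiv _ equivSum.symm

theorem sum_eq {M : Type*} [AddCommMonoid M] (f : RVert n m p q p' q' → M) :
    ∑ v, f v =
      (∑ i, ∑ a, f (vK1 i a)) + (∑ i, ∑ a, f (vK2 i a)) + (∑ i, ∑ a, f (vS1 i a)) +
      (∑ i, ∑ a, f (vS2 i a)) + (∑ l, ∑ c, f (eK1 l c)) + (∑ l, ∑ c, f (eK2 l c)) +
      (∑ l, ∑ c, f (eS1 l c)) + (∑ l, ∑ c, f (eS2 l c)) + ∑ lr, ∑ s, ∑ j, f (link lr s j) := by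
  rw [← equivSum.symm.sum_comp]
  simp only [Fintype.sum_sum_type, Fintype.sum_prod_type, add_assoc]
  rfl

end RVert

section Reduction

open RVert

variable {n m p q p' q' : ℕ} (ep1 ep2 : Fin m → Fin n) (A : Set (RVert n m p q p' q'))

open scoped Classical

-- `P` also sees the `L¹`/`L²` flag `s`, so that in `nbrSignOn_link` the predicate, and with it the
-- `Decidable` instance, is literally the adjacency relation of `G'`.
noncomputable def linkSum (P : Bool → Bool → Fin m → Prop) [∀ lr s j, Decidable (P lr s j)] :
    ℤ :=
  ∑ x : Bool × Bool × Fin m, if P x.1 x.2.1 x.2.2 then cutSign A (link x.1 x.2.1 x.2.2) else 0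

theorem abs_linkSum_le (P : Bool → Bool → Fin m → Prop) [∀ lr s j, Decidable (P lr s j)] :
    |linkSum A P| ≤ 4 * m := by
  have h := abs_sum_ite_cutSign_le (A := A) (fun x : Bool × Bool × Fin m => P x.1 x.2.1 x.2.2)
    (fun x => link x.1 x.2.1 x.2.2)
  simp only [Fintype.card_prod, Fintype.card_bool, Fintype.card_fin] at h
  rw [linkSum]
  push_cast at h
  linarith

private theorem eq_or_eq_symm_iff {α : Type*} {a b : α} : (a = b ∨ b = a) ↔ b = a :=
  ⟨fun h => h.elim Eq.symm id, Or.inr⟩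

variable {ep1 ep2 A}

local notation "G'" => reductionGraph n m p q p' q' ep1 ep2

theorem nbrSignOn_vK1 (k : Fin n) (a : Fin q) :
    nbrSignOn G' A univ (vK1 k a) = partSum A (vK1 k) + partSum A (vK2 k) + partSum A (vS1 k) +
      linkSum A (fun lr _ j => linkIdx ep1 ep2 lr j < k) - cutSign A (vK1 k a) := by
  rw [nbrSignOn_univ_of_adj_iff (fun _ _ => Iff.rfl), RVert.sum_eq]
  simp [radj, partSum, linkSum, Fintype.sum_prod_type, eq_or_eq_symm_iff]

theorem nbrSignOn_vK2 (k : Fin n) (a : Fin q) :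
    nbrSignOn G' A univ (vK2 k a) = partSum A (vK1 k) + partSum A (vK2 k) + partSum A (vS2 k) +
      linkSum A (fun lr _ j => linkIdx ep1 ep2 lr j ≤ k) - cutSign A (vK2 k a) := by
  rw [nbrSignOn_univ_of_adj_iff (fun _ _ => Iff.rfl), RVert.sum_eq]
  simp [radj, partSum, linkSum, Fintype.sum_prod_type, eq_or_eq_symm_iff]

theorem nbrSignOn_vS1 (k : Fin n) (a : Fin p) :
    nbrSignOn G' A univ (vS1 k a) =
      partSum A (vK1 k) + linkSum A (fun lr _ j => linkIdx ep1 ep2 lr j < k) := by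
  rw [nbrSignOn_univ_of_adj_iff (fun _ _ => Iff.rfl), RVert.sum_eq]
  simp [radj, partSum, linkSum, Fintype.sum_prod_type]

theorem nbrSignOn_vS2 (k : Fin n) (a : Fin p) :
    nbrSignOn G' A univ (vS2 k a) =
      partSum A (vK2 k) + linkSum A (fun lr _ j => linkIdx ep1 ep2 lr j < k) := by
  rw [nbrSignOn_univ_of_adj_iff (fun _ _ => Iff.rfl), RVert.sum_eq]
  simp [radj, partSum, linkSum, Fintype.sum_prod_type]

theorem nbrSignOn_eK1 (l : Fin m) (c : Fin q') :
    nbrSignOn G' A univ (eK1 l c) = partSum A (eK1 l) + partSum A (eK2 l) + partSum A (eS1 l) +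
      linkSum A (fun _ _ j => l ≤ j) - cutSign A (eK1 l c) := by
  rw [nbrSignOn_univ_of_adj_iff (fun _ _ => Iff.rfl), RVert.sum_eq]
  simp [radj, partSum, linkSum, Fintype.sum_prod_type, eq_or_eq_symm_iff]

theorem nbrSignOn_eK2 (l : Fin m) (c : Fin q') :
    nbrSignOn G' A univ (eK2 l c) = partSum A (eK1 l) + partSum A (eK2 l) + partSum A (eS2 l) +
      linkSum A (fun _ _ j => l < j) - cutSign A (eK2 l c) := by
  rw [nbrSignOn_univ_of_adj_iff (fun _ _ => Iff.rfl), RVert.sum_eq]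
  simp [radj, partSum, linkSum, Fintype.sum_prod_type, eq_or_eq_symm_iff]

theorem nbrSignOn_eS1 (l : Fin m) (c : Fin p') :
    nbrSignOn G' A univ (eS1 l c) =
      partSum A (eK1 l) + linkSum A (fun lr _ j => l < j ∨ l = j ∧ lr = false) := by
  rw [nbrSignOn_univ_of_adj_iff (fun _ _ => Iff.rfl), RVert.sum_eq]
  simp [radj, partSum, linkSum, Fintype.sum_prod_type]

theorem nbrSignOn_eS2 (l : Fin m) (c : Fin p') :
    nbrSignOn G' A univ (eS2 l c) = partSum A (eK2 l) + linkSum A (fun _ _ j => l < j) := by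
  rw [nbrSignOn_univ_of_adj_iff (fun _ _ => Iff.rfl), RVert.sum_eq]
  simp [radj, partSum, linkSum, Fintype.sum_prod_type]

theorem nbrSignOn_link (lr s : Bool) (j : Fin m) :
    nbrSignOn G' A univ (link lr s j) =
      ∑ k ∈ Ioi (linkIdx ep1 ep2 lr j),
          (partSum A (vK1 k) + partSum A (vK2 k) + partSum A (vS1 k) + partSum A (vS2 k)) +
        partSum A (vK2 (linkIdx ep1 ep2 lr j)) +
        ∑ l ∈ Iio j,
          (partSum A (eK1 l) + partSum A (eK2 l) + partSum A (eS1 l) + partSum A (eS2 l)) +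
        partSum A (eK1 j) + (if lr = false then partSum A (eS1 j) else 0) +
        linkSum A (fun lr' s' j' =>
          radj ep1 ep2 (link lr s j : RVert n m p q p' q') (link lr' s' j') ∨
            radj ep1 ep2 (link lr' s' j' : RVert n m p q p' q') (link lr s j)) -
        cutSign A (link lr s j) := by
  rw [nbrSignOn_univ_of_adj_iff (fun _ _ => Iff.rfl), RVert.sum_eq]
  cases lr <;>
    simp [radj, partSum, linkSum, Fintype.sum_prod_type, sum_add_distrib, ← sum_filter,
      filter_lt_eq_Ioi, filter_gt_eq_Iio, filter_le_eq_Ici, filter_ge_eq_Iic, ← le_iff_lt_or_eq,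
      ← add_sum_Ioi_eq_sum_Ici, ← sum_Iio_add_eq_sum_Iic] <;>
    ring

theorem le_nbrSignOn_link (lr s : Bool) (j : Fin m) :
    ∑ k ∈ Ioi (linkIdx ep1 ep2 lr j),
        (partSum A (vK1 k) + partSum A (vK2 k) + partSum A (vS1 k) + partSum A (vS2 k)) +
      partSum A (vK2 (linkIdx ep1 ep2 lr j)) +
      ∑ l ∈ Iio j,
        (partSum A (eK1 l) + partSum A (eK2 l) + partSum A (eS1 l) + partSum A (eS2 l)) +
      partSum A (eK1 j) + (if lr = false then partSum A (eS1 j) else 0) - 4 * m - 1 ≤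
        nbrSignOn G' A univ (link lr s j) := by
  have hlink := abs_le.mp <| abs_linkSum_le A fun lr' s' j' =>
    radj ep1 ep2 (link lr s j : RVert n m p q p' q') (link lr' s' j') ∨
      radj ep1 ep2 (link lr' s' j' : RVert n m p q p' q') (link lr s j)
  rw [nbrSignOn_link]
  linarith [cutSign_le_one A (link lr s j)]

variable {B : Set (RVert n m p q p' q')}

theorem vertexGadget_balance (hmax : IsMaxCut G' A B) (k : Fin n) (hq : (4 * m : ℤ) < q)
    (hp : 2 * q + 4 * m + 1 < (p : ℤ)) (hflip : 4 * m * (p + q) < (q * q : ℤ)) :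
    0 ≤ partSum A (vK1 k) + partSum A (vK2 k) + partSum A (vS1 k) + partSum A (vS2 k) := by
  have hx1 := abs_linkSum_le A (fun lr _ j => linkIdx ep1 ep2 lr j < k)
  have hx2 := abs_linkSum_le A (fun lr _ j => linkIdx ep1 ep2 lr j ≤ k)
  refine (hmax.grainedGadget_balance (fun _ _ h => by simpa using h)
    (fun _ _ => by simp [reductionGraph, radj, eq_comm])
    (fun _ _ => by simp [reductionGraph, radj]) (fun _ _ => by simp [reductionGraph, radj])
    (fun _ _ => by simp [reductionGraph, radj])
    (nbrSignOn_vK1 k) (nbrSignOn_vK2 k) (nbrSignOn_vS1 k) (nbrSignOn_vS2 k)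
    (by linarith) (by linarith) (by linarith) (by linarith) ?_).1
  have := abs_le.mp hx1
  have := abs_le.mp hx2
  nlinarith

theorem edgeGadget_balance (hmax : IsMaxCut G' A B) (l : Fin m) (hq : (4 * m : ℤ) < q')
    (hp : 2 * q' + 4 * m + 1 < (p' : ℤ)) (hflip : 4 * m * (p' - q') < (q' * q' : ℤ)) :
    0 ≤ partSum A (eK1 l) + partSum A (eK2 l) + partSum A (eS1 l) + partSum A (eS2 l) ∧
      (q' : ℤ) - p' ≤ partSum A (eK1 l) + partSum A (eS1 l) := by
  have hx1 := abs_linkSum_le A (fun _ _ j => l ≤ j)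
  have hx2 := abs_linkSum_le A (fun _ _ j => l < j)
  have hy1 := abs_linkSum_le A (fun lr _ j => l < j ∨ l = j ∧ lr = false)
  refine hmax.grainedGadget_balance (fun _ _ h => by simpa using h)
    (fun _ _ => by simp [reductionGraph, radj, eq_comm])
    (fun _ _ => by simp [reductionGraph, radj]) (fun _ _ => by simp [reductionGraph, radj])
    (fun _ _ => by simp [reductionGraph, radj])
    (nbrSignOn_eK1 l) (nbrSignOn_eK2 l) (nbrSignOn_eS1 l) (nbrSignOn_eS2 l)
    (by linarith) (by linarith) (by linarith) (by linarith) ?_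
  have := abs_le.mp hx2
  nlinarith

end Reduction

theorem two_mul_le_three_mul_of_cubic {V : Type*} [Fintype V] [LinearOrder V] {m : ℕ}
    {G : SimpleGraph V} (hcubic : ∀ v, (G.neighborSet v).ncard = 3) {ep1 ep2 : Fin m → V}
    (hlt : ∀ j, ep1 j < ep2 j) (hadj : ∀ j, G.Adj (ep1 j) (ep2 j))
    (hinj : Function.Injective fun j => (ep1 j, ep2 j)) : 2 * m ≤ 3 * Fintype.card V := by
  classical
  have hdeg : ∀ v, G.degree v = 3 := fun v => by
    rw [← hcubic v, ← SimpleGraph.card_neighborFinset_eq_degree, ← Set.ncard_coe_finset,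
      SimpleGraph.coe_neighborFinset]
  have hedges : m ≤ #G.edgeFinset := by
    simpa using card_le_card_of_injOn (s := univ) (fun j => s(ep1 j, ep2 j))
      (fun j _ => by simpa using hadj j) fun j _ j' _ h => by
        rcases Sym2.eq_iff.mp h with ⟨h1, h2⟩ | ⟨h1, h2⟩
        · exact hinj (Prod.ext h1 h2)
        · exact absurd ((hlt j).trans (h2 ▸ h1 ▸ hlt j')) (lt_irrefl _)
  have hsum := G.sum_degrees_eq_twice_card_edges
  simp only [hdeg, sum_const, card_univ, smul_eq_mul] at hsum
  omega

/-- in a maximum cut `[A,B]` of the reduction graph `G'` (with the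
specific parameters), if `K''_i ⊆ A` then every link vertex associated with `v_i`
belongs to `B`. -/
theorem reductionGraph_maxCut_link_property (n m : ℕ) (hn : 4 ≤ n) (G : SimpleGraph (Fin n))
    (hcubic : ∀ v : Fin n, (G.neighborSet v).ncard = 3)
    (ep1 ep2 : Fin m → Fin n) (hlt : ∀ j, ep1 j < ep2 j)
    (hedges : ∀ u v : Fin n,
      G.Adj u v ↔ ∃ j, (ep1 j = u ∧ ep2 j = v) ∨ (ep1 j = v ∧ ep2 j = u))
    (hinj : Function.Injective fun j => (ep1 j, ep2 j))
    (A B : Set (RVert n m (25*n^2 + 30*n) (12*n^2 + 12*n + 1) (11*n^2 + 6*n) (5*n^2 + 1)))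
    (hmax : IsMaxCut
      (reductionGraph n m (25*n^2 + 30*n) (12*n^2 + 12*n + 1) (11*n^2 + 6*n) (5*n^2 + 1)
        ep1 ep2) A B)
    (i : Fin n) (hK2A : ∀ aa, RVert.vK2 i aa ∈ A) :
    ∀ (lr s : Bool) (j : Fin m), linkIdx ep1 ep2 lr j = i → RVert.link lr s j ∈ B := by
  intro lr s j hidx
  by_contra hB
  have hL : RVert.link lr s j ∈ A := (hmax.1 ▸ Set.mem_univ (RVert.link lr s j)).resolve_right hB
  have hN : (4 : ℤ) ≤ n := by exact_mod_cast hn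
  have hM : (4 * m : ℤ) ≤ 6 * n := by
    have := two_mul_le_three_mul_of_cubic hcubic hlt
      (fun j => (hedges _ _).mpr ⟨j, .inl ⟨rfl, rfl⟩⟩) hinj
    simp only [Fintype.card_fin] at this
    omega
  have hH := sum_nonneg fun k (_ : k ∈ Ioi i) => vertexGadget_balance hmax k
    (by push_cast; nlinarith) (by push_cast; nlinarith) (by
      push_cast
      nlinarith [mul_le_mul_of_nonneg_right hM (by positivity : (0 : ℤ) ≤ 37 * n ^ 2 + 42 * n + 1)])
  have hE := fun l => edgeGadget_balance hmax l (by push_cast; nlinarith) (by push_cast; nlinarith)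
    (by
      push_cast
      nlinarith [mul_le_mul_of_nonneg_right hM (by nlinarith : (0 : ℤ) ≤ 6 * n ^ 2 + 6 * n - 1)])
  have hEsum := sum_nonneg fun l (_ : l ∈ Iio j) => (hE l).1
  have hflip := hmax.cutSign_mul_nbrSignOn_nonpos (RVert.link lr s j)
  have hbound := le_nbrSignOn_link (ep1 := ep1) (ep2 := ep2) (A := A) lr s j
  rw [cutSign_of_mem hL, one_mul] at hflip
  rw [hidx, partSum_of_forall_mem hK2A] at hbound
  have hEj := (hE j).2
  have hK1j := abs_le.mp (abs_partSum_le (A := A) (f := RVert.eK1 j))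
  simp only [Fintype.card_fin] at hK1j
  push_cast at hEj hK1j
  cases lr <;> simp only [Fintype.card_fin, if_true, Bool.true_eq_false, if_false] at hbound <;>
    push_cast at hbound <;> nlinarith
end
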